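/- arXiv:2506.03066 — 4 statements merged into one kernel-verified Lean document; each statement's English description precedes it below -/
import Mathlib

section
/- (Negative drift lemma.) Let V : ℝ^d → ℝ be L-smooth, let θ ∈ ℝ^d, let μ > 0, and let v be distributed according to the standard Gaussian measure N(0, I_d) on ℝ^d. Then E_v[ sign(V(θ + μv) − V(θ)) · ⟨∇V(θ), v⟩ ] ≥ √(2/π)·‖∇V(θ)‖₂ − μLd. -/
open MeasureTheory ProbabilityTheory RealInnerProductSpace

/-- The standard Gaussian measure `N(0, I_d)` on `ℝ^d = EuclideanSpace ℝ (Fin d)`,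
obtained as the law of a vector with i.i.d. standard normal coordinates. -/
noncomputable def stdGaussian (d : ℕ) : Measure (EuclideanSpace ℝ (Fin d)) :=
  (Measure.pi fun _ : Fin d => gaussianReal 0 1).map
    (MeasurableEquiv.toLp 2 (Fin d → ℝ))

namespace NegDrift

open Real MeasureTheory Set
open scoped ENNReal NNReal

/-! ### Scalar Gaussian computations -/

lemma p1_apply (x : ℝ) :
    gaussianPDFReal 0 1 x = (Real.sqrt (2 * π))⁻¹ * Real.exp (-(1/2) * x ^ 2) := by
  rw [gaussianPDFReal_def]
  push_cast
  ring_nf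

lemma integrable_exp_half : Integrable (fun x : ℝ => rexp (-(1/2) * x ^ 2)) :=
  integrable_exp_neg_mul_sq (by norm_num)

lemma integrable_sq_exp : Integrable (fun x : ℝ => x ^ 2 * rexp (-(1/2) * x ^ 2)) := by
  have h := integrable_rpow_mul_exp_neg_mul_sq (b := 1/2) (by norm_num) (s := 2) (by norm_num)
  have : ∀ x : ℝ, x ^ (2:ℝ) = x ^ 2 := fun x => by
    rw [show (2:ℝ) = ((2:ℕ):ℝ) by norm_num, Real.rpow_natCast]
  simpa [this] using h

lemma integrable_abs_exp : Integrable (fun x : ℝ => |x| * rexp (-(1/2) * x ^ 2)) := by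
  have h := (integrable_mul_exp_neg_mul_sq (b := 1/2) (by norm_num)).abs
  simpa [abs_mul, abs_of_nonneg (Real.exp_pos _).le] using h

lemma tendsto_x_exp_atTop :
    Filter.Tendsto (fun x : ℝ => x * rexp (-(1/2) * x ^ 2)) Filter.atTop (nhds 0) := by
  have h := rpow_mul_exp_neg_mul_sq_isLittleO_exp_neg (b := 1/2) (by norm_num) 1
  have h2 : Filter.Tendsto (fun x : ℝ => rexp (-(1/2) * x)) Filter.atTop (nhds 0) := by
    have := Real.tendsto_exp_atBot.comp
      (Filter.Tendsto.const_mul_atTop_of_neg (by norm_num : (-(1/2):ℝ) < 0) Filter.tendsto_id)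
    simpa [Function.comp_def] using this
  have h3 := h.isBigO.trans_tendsto h2
  have : ∀ᶠ x : ℝ in Filter.atTop, x ^ (1:ℝ) * rexp (-(1/2) * x ^ 2)
      = x * rexp (-(1/2) * x ^ 2) := by
    filter_upwards [Filter.eventually_ge_atTop (0:ℝ)] with x hx
    rw [Real.rpow_one]
  exact Filter.Tendsto.congr' this h3

lemma tendsto_exp_sq_atTop :
    Filter.Tendsto (fun x : ℝ => rexp (-(1/2) * x ^ 2)) Filter.atTop (nhds 0) := by
  apply Real.tendsto_exp_atBot.comp
  apply Filter.Tendsto.const_mul_atTop_of_neg (by norm_num : (-(1/2):ℝ) < 0)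
  exact Filter.tendsto_pow_atTop two_ne_zero

lemma tendsto_exp_sq_atBot :
    Filter.Tendsto (fun x : ℝ => rexp (-(1/2) * x ^ 2)) Filter.atBot (nhds 0) := by
  have h := tendsto_exp_sq_atTop.comp Filter.tendsto_neg_atBot_atTop
  simpa [Function.comp_def] using h

lemma hasDerivAt_negexp (x : ℝ) :
    HasDerivAt (fun y : ℝ => -rexp (-(1/2) * y ^ 2)) (x * rexp (-(1/2) * x ^ 2)) x := by
  have h := (((hasDerivAt_pow 2 x).const_mul (-(1/2):ℝ)).exp).neg
  refine h.congr_deriv ?_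
  simp
  ring

lemma hasDerivAt_exp' (x : ℝ) :
    HasDerivAt (fun y : ℝ => rexp (-(1/2) * y ^ 2)) (-x * rexp (-(1/2) * x ^ 2)) x := by
  have h := ((hasDerivAt_pow 2 x).const_mul (-(1/2):ℝ)).exp
  convert h using 1
  ring

lemma int_abs_exp : ∫ x : ℝ, |x| * rexp (-(1/2) * x ^ 2) = 2 := by
  have hint := integrable_abs_exp
  rw [← intervalIntegral.integral_Iic_add_Ioi (b := (0:ℝ)) hint.integrableOn hint.integrableOn]
  have h1 : ∫ x in Iic (0:ℝ), |x| * rexp (-(1/2) * x ^ 2) = 1 := by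
    have he : ∀ x ∈ Iic (0:ℝ), |x| * rexp (-(1/2) * x ^ 2) = -x * rexp (-(1/2) * x ^ 2) := by
      intro x hx; rw [abs_of_nonpos hx]
    rw [setIntegral_congr_fun measurableSet_Iic he]
    have := integral_Iic_of_hasDerivAt_of_tendsto' (a := (0:ℝ))
      (f := fun y : ℝ => rexp (-(1/2) * y ^ 2))
      (f' := fun x => -x * rexp (-(1/2) * x ^ 2))
      (fun x _ => hasDerivAt_exp' x) ?_ tendsto_exp_sq_atBot
    · simpa using this
    · apply Integrable.integrableOn
      have : ∀ x : ℝ, -x * rexp (-(1/2) * x ^ 2) = -(x * rexp (-(1/2) * x ^ 2)) := fun x => by ring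
      simp_rw [this]
      exact (integrable_mul_exp_neg_mul_sq (b := 1/2) (by norm_num)).neg
  have h2 : ∫ x in Ioi (0:ℝ), |x| * rexp (-(1/2) * x ^ 2) = 1 := by
    have he : ∀ x ∈ Ioi (0:ℝ), |x| * rexp (-(1/2) * x ^ 2) = x * rexp (-(1/2) * x ^ 2) := by
      intro x hx; rw [abs_of_pos hx]
    rw [setIntegral_congr_fun measurableSet_Ioi he]
    have := integral_Ioi_of_hasDerivAt_of_tendsto' (a := (0:ℝ))
      (f := fun y : ℝ => -rexp (-(1/2) * y ^ 2))
      (f' := fun x => x * rexp (-(1/2) * x ^ 2)) (m := 0)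
      (fun x _ => hasDerivAt_negexp x) ?_ ?_
    · simpa using this
    · exact (integrable_mul_exp_neg_mul_sq (b := 1/2) (by norm_num)).integrableOn
    · simpa using tendsto_exp_sq_atTop.neg
  rw [h1, h2]; norm_num

lemma integral_exp_half : ∫ x : ℝ, rexp (-(1/2) * x ^ 2) = Real.sqrt (2 * π) := by
  rw [integral_gaussian]
  norm_num
  ring

lemma int_sq_exp : ∫ x : ℝ, x ^ 2 * rexp (-(1/2) * x ^ 2) = Real.sqrt (2 * π) := by
  have hF : ∀ x : ℝ, HasDerivAt (fun y : ℝ => -y * rexp (-(1/2) * y ^ 2))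
      (x ^ 2 * rexp (-(1/2) * x ^ 2) - rexp (-(1/2) * x ^ 2)) x := by
    intro x
    have h1 : HasDerivAt (fun y : ℝ => -y) (-1) x := (hasDerivAt_id x).neg
    have h2 := ((hasDerivAt_pow 2 x).const_mul (-(1/2):ℝ)).exp
    have h := h1.mul h2
    refine h.congr_deriv ?_
    simp
    ring
  have hFint : Integrable (fun x : ℝ => x ^ 2 * rexp (-(1/2) * x ^ 2) - rexp (-(1/2) * x ^ 2)) :=
    integrable_sq_exp.sub integrable_exp_half
  have htop : Filter.Tendsto (fun y : ℝ => -y * rexp (-(1/2) * y ^ 2)) Filter.atTop (nhds 0) := by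
    have := tendsto_x_exp_atTop.neg
    simpa using this.congr (fun x => by ring)
  have hbot : Filter.Tendsto (fun y : ℝ => -y * rexp (-(1/2) * y ^ 2)) Filter.atBot (nhds 0) := by
    have h := tendsto_x_exp_atTop.comp Filter.tendsto_neg_atBot_atTop
    have : (fun x : ℝ => (-x) * rexp (-(1/2) * (-x) ^ 2)) = fun x : ℝ => -x * rexp (-(1/2) * x ^ 2) := by
      funext x; rw [neg_sq]
    simpa [Function.comp_def, this] using h
  have hzero : ∫ x : ℝ, (x ^ 2 * rexp (-(1/2) * x ^ 2) - rexp (-(1/2) * x ^ 2)) = 0 := by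
    rw [← intervalIntegral.integral_Iic_add_Ioi (b := (0:ℝ)) hFint.integrableOn hFint.integrableOn]
    have hI1 := integral_Iic_of_hasDerivAt_of_tendsto' (a := (0:ℝ))
      (fun x _ => hF x) hFint.integrableOn hbot
    have hI2 := integral_Ioi_of_hasDerivAt_of_tendsto' (a := (0:ℝ))
      (fun x _ => hF x) hFint.integrableOn htop
    rw [hI1, hI2]
    simp
  have := integral_sub integrable_sq_exp integrable_exp_half
  rw [hzero] at this
  rw [integral_exp_half] at this
  linarith [this]

lemma sqrt_two_pi_pos : (0:ℝ) < Real.sqrt (2 * π) :=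
  Real.sqrt_pos.mpr (by positivity)

lemma int_pdf : ∫ x : ℝ, gaussianPDFReal 0 1 x = 1 :=
  integral_gaussianPDFReal_eq_one 0 one_ne_zero

lemma int_sq_pdf : ∫ x : ℝ, x ^ 2 * gaussianPDFReal 0 1 x = 1 := by
  simp_rw [p1_apply]
  have : ∀ x : ℝ, x ^ 2 * ((Real.sqrt (2 * π))⁻¹ * rexp (-(1/2) * x ^ 2))
      = (Real.sqrt (2 * π))⁻¹ * (x ^ 2 * rexp (-(1/2) * x ^ 2)) := fun x => by ring
  simp_rw [this]
  rw [integral_const_mul, int_sq_exp]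
  exact inv_mul_cancel₀ (ne_of_gt sqrt_two_pi_pos)

lemma sqrt_two_div_pi : Real.sqrt (2 / π) = 2 / Real.sqrt (2 * π) := by
  have h4 : (2:ℝ) / π = 4 / (2 * π) := by
    rw [div_eq_div_iff (ne_of_gt Real.pi_pos) (by positivity)]
    ring
  rw [h4, show (4:ℝ) = 2^2 by norm_num, Real.sqrt_div (by positivity), Real.sqrt_sq (by norm_num)]

lemma int_abs_pdf : ∫ x : ℝ, |x| * gaussianPDFReal 0 1 x = Real.sqrt (2 / π) := by
  simp_rw [p1_apply]
  have : ∀ x : ℝ, |x| * ((Real.sqrt (2 * π))⁻¹ * rexp (-(1/2) * x ^ 2))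
      = (Real.sqrt (2 * π))⁻¹ * (|x| * rexp (-(1/2) * x ^ 2)) := fun x => by ring
  simp_rw [this]
  rw [integral_const_mul, int_abs_exp, sqrt_two_div_pi]
  ring

lemma integrable_pdf : Integrable (gaussianPDFReal 0 1) := integrable_gaussianPDFReal 0 1

lemma integrable_sq_pdf : Integrable (fun x : ℝ => x ^ 2 * gaussianPDFReal 0 1 x) := by
  simp_rw [p1_apply]
  have : ∀ x : ℝ, x ^ 2 * ((Real.sqrt (2 * π))⁻¹ * rexp (-(1/2) * x ^ 2))
      = (Real.sqrt (2 * π))⁻¹ * (x ^ 2 * rexp (-(1/2) * x ^ 2)) := fun x => by ring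
  simp_rw [this]
  exact integrable_sq_exp.const_mul _

lemma integrable_abs_pdf : Integrable (fun x : ℝ => |x| * gaussianPDFReal 0 1 x) := by
  simp_rw [p1_apply]
  have : ∀ x : ℝ, |x| * ((Real.sqrt (2 * π))⁻¹ * rexp (-(1/2) * x ^ 2))
      = (Real.sqrt (2 * π))⁻¹ * (|x| * rexp (-(1/2) * x ^ 2)) := fun x => by ring
  simp_rw [this]
  exact integrable_abs_exp.const_mul _

lemma lintegral_pi_prod : ∀ {n : ℕ} (f : Fin n → ℝ → ℝ≥0∞), (∀ i, Measurable (f i)) →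
    ∫⁻ x : Fin n → ℝ, ∏ i, f i (x i) ∂(Measure.pi fun _ => (volume : Measure ℝ))
      = ∏ i, ∫⁻ x, f i x := by
  intro n
  induction n with
  | zero =>
      intro f hf
      simp [lintegral_const]
  | succ n ih =>
      intro f hf
      have h := (measurePreserving_piFinSuccAbove (fun _ : Fin (n + 1) => (volume : Measure ℝ)) 0)
      have hmeas : Measurable fun x : Fin (n + 1) → ℝ => ∏ i, f i (x i) :=
        Finset.measurable_prod _ fun i _ => (hf i).comp (measurable_pi_apply i)
      rw [← (MeasurePreserving.symm _ h).lintegral_comp hmeas]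
      simp_rw [MeasurableEquiv.piFinSuccAbove_symm_apply, Fin.insertNthEquiv, Equiv.coe_fn_mk,
        Fin.insertNth_zero, Fin.prod_univ_succ]
      simp only [Fin.zero_succAbove, cast_eq, Fin.cons_zero, Fin.cons_succ]
      rw [lintegral_prod_mul (f := fun a => f 0 a)
        (g := fun y : Fin n → ℝ => ∏ j : Fin n, f j.succ (y j)) (hf 0).aemeasurable
        (Finset.measurable_prod Finset.univ (fun (j : Fin n) _ =>
          (hf j.succ).comp (measurable_pi_apply j))).aemeasurable]
      rw [ih (fun j => f j.succ) (fun j => hf j.succ)]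

lemma pi_gauss (d : ℕ) :
    (Measure.pi fun _ : Fin d => gaussianReal 0 1)
      = (Measure.pi fun _ : Fin d => (volume : Measure ℝ)).withDensity
          fun x => ∏ i, ENNReal.ofReal (gaussianPDFReal 0 1 (x i)) := by
  refine Measure.pi_eq fun s hs => ?_
  rw [withDensity_apply _ (MeasurableSet.univ_pi hs),
    ← lintegral_indicator (MeasurableSet.univ_pi hs)]
  have hind : ∀ x : Fin d → ℝ,
      (Set.univ.pi s).indicator (fun x => ∏ i, ENNReal.ofReal (gaussianPDFReal 0 1 (x i))) x
        = ∏ i, (s i).indicator (fun t => ENNReal.ofReal (gaussianPDFReal 0 1 t)) (x i) := by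
    intro x
    by_cases hx : x ∈ Set.univ.pi s
    · rw [Set.indicator_of_mem hx]
      exact Finset.prod_congr rfl fun i _ =>
        (Set.indicator_of_mem (hx i (Set.mem_univ i))
          (fun t => ENNReal.ofReal (gaussianPDFReal 0 1 t))).symm
    · rw [Set.indicator_of_notMem hx]
      rw [Set.mem_univ_pi] at hx
      push_neg at hx
      obtain ⟨i, hi⟩ := hx
      exact (Finset.prod_eq_zero (Finset.mem_univ i)
        (by rw [Set.indicator_of_notMem hi])).symm
  simp_rw [hind]
  rw [lintegral_pi_prod _ (fun i =>
    ((measurable_gaussianPDFReal 0 1).ennreal_ofReal).indicator (hs i))]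
  refine Finset.prod_congr rfl fun i _ => ?_
  rw [gaussianReal_apply 0 one_ne_zero, lintegral_indicator (hs i), gaussianPDF_def]

/-- The NNReal-valued density of the product of standard Gaussians. -/
noncomputable def Nd (d : ℕ) (x : Fin d → ℝ) : ℝ≥0 :=
  ∏ i, (gaussianPDFReal 0 1 (x i)).toNNReal

lemma measurable_Nd (d : ℕ) : Measurable (Nd d) :=
  Finset.measurable_prod _ fun i _ =>
    ((measurable_gaussianPDFReal 0 1).comp (measurable_pi_apply i)).real_toNNReal

lemma coe_Nd (d : ℕ) (x : Fin d → ℝ) :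
    ((Nd d x : ℝ≥0) : ℝ) = ∏ i, gaussianPDFReal 0 1 (x i) := by
  rw [Nd, NNReal.coe_prod]
  exact Finset.prod_congr rfl fun i _ =>
    Real.coe_toNNReal _ (gaussianPDFReal_nonneg 0 1 (x i))

lemma stdGaussian_eq (d : ℕ) :
    stdGaussian d = ((volume : Measure (Fin d → ℝ)).withDensity
        fun x => ((Nd d x : ℝ≥0) : ℝ≥0∞)).map
      (MeasurableEquiv.toLp 2 (Fin d → ℝ)) := by
  rw [_root_.stdGaussian, pi_gauss, MeasureTheory.volume_pi]
  congr 1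
  congr 1
  funext x
  rw [Nd, ENNReal.coe_finset_prod]
  exact Finset.prod_congr rfl fun i _ => rfl

lemma bridge_pi (d : ℕ) (f : EuclideanSpace ℝ (Fin d) → ℝ) :
    ∫ v, f v ∂stdGaussian d
      = ∫ x : Fin d → ℝ, f ((MeasurableEquiv.toLp 2 (Fin d → ℝ)) x)
          * ∏ i, gaussianPDFReal 0 1 (x i) := by
  rw [stdGaussian_eq, integral_map_equiv, integral_withDensity_eq_integral_smul (measurable_Nd d)]
  congr 1
  funext x
  simp only [Function.comp_apply, NNReal.smul_def, smul_eq_mul, coe_Nd]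
  ring

lemma integrable_std_iff (d : ℕ) (f : EuclideanSpace ℝ (Fin d) → ℝ) :
    Integrable f (stdGaussian d)
      ↔ Integrable (fun x : Fin d → ℝ =>
          f ((MeasurableEquiv.toLp 2 (Fin d → ℝ)) x)
            * ∏ i, gaussianPDFReal 0 1 (x i)) := by
  rw [stdGaussian_eq, integrable_map_equiv,
    integrable_withDensity_iff_integrable_smul (measurable_Nd d)]
  constructor <;> intro h <;> refine h.congr (Filter.Eventually.of_forall fun x => ?_) <;>
    · simp only [Function.comp_apply, NNReal.smul_def, smul_eq_mul, coe_Nd]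
      ring

lemma prod_pdf_eq (d : ℕ) (v : EuclideanSpace ℝ (Fin d)) :
    ∏ i, gaussianPDFReal 0 1 (v i)
      = (Real.sqrt (2 * π))⁻¹ ^ d * Real.exp (-(1/2) * ‖v‖ ^ 2) := by
  have hn : ‖v‖ ^ 2 = ∑ i, (v i) ^ 2 := by
    rw [EuclideanSpace.norm_eq, Real.sq_sqrt (by positivity)]
    exact Finset.sum_congr rfl fun i _ => by rw [Real.norm_eq_abs, sq_abs]
  have hp : ∀ i : Fin d, gaussianPDFReal 0 1 (v i)
      = (Real.sqrt (2 * π))⁻¹ * Real.exp (-(1/2) * (v i) ^ 2) := fun i => by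
    rw [gaussianPDFReal_def]; push_cast; ring_nf
  simp_rw [hp]
  rw [Finset.prod_mul_distrib, Finset.prod_const, ← Real.exp_sum, Finset.card_univ,
    Fintype.card_fin, hn, Finset.mul_sum]

lemma bridge_euc (d : ℕ) (f : EuclideanSpace ℝ (Fin d) → ℝ) :
    ∫ v, f v ∂stdGaussian d
      = ∫ v : EuclideanSpace ℝ (Fin d),
          f v * ((Real.sqrt (2 * π))⁻¹ ^ d * Real.exp (-(1/2) * ‖v‖ ^ 2)) := by
  rw [bridge_pi]
  rw [← (EuclideanSpace.volume_preserving_symm_measurableEquiv_toLp (Fin d)).integral_comp'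
    (fun x => f ((MeasurableEquiv.toLp 2 (Fin d → ℝ)) x)
      * ∏ i, gaussianPDFReal 0 1 (x i))]
  congr 1
  funext v
  rw [MeasurableEquiv.apply_symm_apply, ← prod_pdf_eq]
  rfl

lemma rot_inv (d : ℕ)
    (R : EuclideanSpace ℝ (Fin d) ≃ₗᵢ[ℝ] EuclideanSpace ℝ (Fin d))
    (f : EuclideanSpace ℝ (Fin d) → ℝ) :
    ∫ v, f (R v) ∂stdGaussian d = ∫ v, f v ∂stdGaussian d := by
  rw [bridge_euc, bridge_euc]
  have hfun : ∀ v : EuclideanSpace ℝ (Fin d),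
      f (R v) * ((Real.sqrt (2 * π))⁻¹ ^ d * Real.exp (-(1/2) * ‖v‖ ^ 2))
        = (fun w => f w * ((Real.sqrt (2 * π))⁻¹ ^ d * Real.exp (-(1/2) * ‖w‖ ^ 2))) (R v) := by
    intro v
    simp [R.norm_map]
  simp_rw [hfun]
  exact MeasureTheory.integral_comp R
    (fun w => f w * ((Real.sqrt (2 * π))⁻¹ ^ d * Real.exp (-(1/2) * ‖w‖ ^ 2)))

lemma marginal (d : ℕ) (i : Fin d) (h : ℝ → ℝ)
    (hint : Integrable (fun t => h t * gaussianPDFReal 0 1 t)) :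
    (Integrable (fun x : Fin d → ℝ => h (x i) * ∏ j, gaussianPDFReal 0 1 (x j)))
    ∧ ∫ x : Fin d → ℝ, h (x i) * ∏ j, gaussianPDFReal 0 1 (x j)
        = ∫ t, h t * gaussianPDFReal 0 1 t := by
  classical
  set F : Fin d → ℝ → ℝ :=
    fun j => if j = i then (fun t => h t * gaussianPDFReal 0 1 t) else gaussianPDFReal 0 1
    with hF
  have hFx : ∀ x : Fin d → ℝ,
      h (x i) * ∏ j, gaussianPDFReal 0 1 (x j) = ∏ j, F j (x j) := by
    intro x
    rw [← Finset.prod_erase_mul Finset.univ (fun j => F j (x j)) (Finset.mem_univ i),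
      ← Finset.prod_erase_mul Finset.univ (fun j => gaussianPDFReal 0 1 (x j))
        (Finset.mem_univ i)]
    have h1 : ∏ j ∈ Finset.univ.erase i, F j (x j)
        = ∏ j ∈ Finset.univ.erase i, gaussianPDFReal 0 1 (x j) :=
      Finset.prod_congr rfl fun j hj => by simp [hF, Finset.ne_of_mem_erase hj]
    have h2 : F i (x i) = h (x i) * gaussianPDFReal 0 1 (x i) := by simp [hF]
    rw [h1, h2]
    ring
  have hFi : ∀ j, Integrable (F j) := by
    intro j
    by_cases hj : j = i <;> simp [hF, hj, hint, integrable_pdf]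
  constructor
  · have heq : (fun x : Fin d → ℝ => h (x i) * ∏ j, gaussianPDFReal 0 1 (x j))
        = fun x => ∏ j, F j (x j) := funext hFx
    rw [heq]
    exact Integrable.fintype_prod (𝕜 := ℝ) hFi
  · simp_rw [hFx]
    rw [MeasureTheory.volume_pi, integral_fintype_prod_eq_prod (ι := Fin d) F,
      ← Finset.prod_erase_mul Finset.univ _ (Finset.mem_univ i)]
    have h1 : ∏ j ∈ Finset.univ.erase i, ∫ t, F j t = 1 :=
      Finset.prod_eq_one fun j hj => by simp [hF, Finset.ne_of_mem_erase hj, int_pdf]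
    have h2 : ∫ t, F i t = ∫ t, h t * gaussianPDFReal 0 1 t := by simp [hF]
    rw [h1, h2, one_mul]

instance stdGaussian_isProb (d : ℕ) : IsProbabilityMeasure (stdGaussian d) := by
  rw [_root_.stdGaussian]
  exact Measure.isProbabilityMeasure_map (MeasurableEquiv.measurable _).aemeasurable

lemma norm_symm (d : ℕ) (x : Fin d → ℝ) :
    ‖(MeasurableEquiv.toLp 2 (Fin d → ℝ)) x‖ ^ 2 = ∑ i, (x i) ^ 2 := by
  rw [EuclideanSpace.norm_eq, Real.sq_sqrt (by positivity)]
  exact Finset.sum_congr rfl fun i _ => by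
    rw [Real.norm_eq_abs, sq_abs]
    rfl

lemma integral_norm_sq_std (d : ℕ) :
    ∫ v, ‖v‖ ^ 2 ∂stdGaussian d = (d : ℝ) := by
  rw [bridge_pi]
  have hx : ∀ x : Fin d → ℝ,
      ‖(MeasurableEquiv.toLp 2 (Fin d → ℝ)) x‖ ^ 2 * ∏ i, gaussianPDFReal 0 1 (x i)
        = ∑ i, ((x i) ^ 2 * ∏ j, gaussianPDFReal 0 1 (x j)) := by
    intro x
    rw [norm_symm, Finset.sum_mul]
  simp_rw [hx]
  rw [integral_finset_sum _ (fun i _ => (marginal d i (fun t => t ^ 2) integrable_sq_pdf).1)]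
  rw [Finset.sum_congr rfl fun i _ =>
    ((marginal d i (fun t => t ^ 2) integrable_sq_pdf).2.trans int_sq_pdf)]
  simp

lemma integrable_norm_sq_std (d : ℕ) :
    Integrable (fun v => ‖v‖ ^ 2) (stdGaussian d) := by
  rw [integrable_std_iff]
  have hx : ∀ x : Fin d → ℝ,
      ‖(MeasurableEquiv.toLp 2 (Fin d → ℝ)) x‖ ^ 2 * ∏ i, gaussianPDFReal 0 1 (x i)
        = ∑ i, ((x i) ^ 2 * ∏ j, gaussianPDFReal 0 1 (x j)) := by
    intro x
    rw [norm_symm, Finset.sum_mul]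
  simp_rw [hx]
  exact integrable_finset_sum _ (fun i _ => (marginal d i (fun t => t ^ 2) integrable_sq_pdf).1)

lemma integral_abs_coord (d : ℕ) (i0 : Fin d) :
    ∫ v : EuclideanSpace ℝ (Fin d), |v i0| ∂stdGaussian d = Real.sqrt (2 / π) := by
  rw [bridge_pi]
  have hx : ∀ x : Fin d → ℝ,
      |((MeasurableEquiv.toLp 2 (Fin d → ℝ)) x) i0| * ∏ i, gaussianPDFReal 0 1 (x i)
        = |x i0| * ∏ i, gaussianPDFReal 0 1 (x i) := fun x => rfl
  simp_rw [hx]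
  exact (marginal d i0 (fun t => |t|) integrable_abs_pdf).2.trans int_abs_pdf

lemma measurable_realSign : Measurable Real.sign := by
  have h : Real.sign = fun r : ℝ => if r < 0 then (-1 : ℝ) else if 0 < r then 1 else 0 := by
    funext r
    rfl
  rw [h]
  exact Measurable.ite measurableSet_Iio measurable_const
    (Measurable.ite measurableSet_Ioi measurable_const measurable_const)

lemma taylor_bound {d : ℕ} {L : ℝ} {V : EuclideanSpace ℝ (Fin d) → ℝ}
    (hdiff : Differentiable ℝ V)
    (hlip : ∀ x y : EuclideanSpace ℝ (Fin d),
      ‖gradient V x - gradient V y‖ ≤ L * ‖x - y‖)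
    (hL : 0 ≤ L) (x w : EuclideanSpace ℝ (Fin d)) :
    |V (x + w) - V x - ⟪gradient V x, w⟫| ≤ L / 2 * ‖w‖ ^ 2 := by
  have hgrad : ∀ y, HasFDerivAt V (InnerProductSpace.toDual ℝ _ (gradient V y)) y :=
    fun y => hasGradientAt_iff_hasFDerivAt.mp (hdiff y).hasGradientAt
  set φ' : ℝ → ℝ := fun t => ⟪gradient V (x + t • w), w⟫ with hφ'
  have hφ : ∀ t : ℝ, HasDerivAt (fun t : ℝ => V (x + t • w)) (φ' t) t := by
    intro t
    have h1 : HasDerivAt (fun t : ℝ => x + t • w) w t := by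
      simpa using ((hasDerivAt_id t).smul_const w).const_add x
    have h2 := (hgrad (x + t • w)).comp_hasDerivAt t h1
    simpa only [Function.comp_def, InnerProductSpace.toDual_apply_apply] using h2
  have hgcont : Continuous (gradient V) := by
    have hlw : LipschitzWith (Real.toNNReal L) (gradient V) := by
      apply LipschitzWith.of_dist_le_mul
      intro a b
      rw [dist_eq_norm, dist_eq_norm]
      exact (hlip a b).trans
        (mul_le_mul_of_nonneg_right (Real.le_coe_toNNReal L) (norm_nonneg _))
    exact hlw.continuous
  have hcont : Continuous φ' := by
    apply Continuous.inner
    · exact hgcont.comp (continuous_const.add (continuous_id.smul continuous_const))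
    · exact continuous_const
  have hFTC := intervalIntegral.integral_eq_sub_of_hasDerivAt
    (f := fun t : ℝ => V (x + t • w)) (a := 0) (b := 1)
    (fun t _ => hφ t) (hcont.intervalIntegrable 0 1)
  have hVal : V (x + w) - V x = ∫ t in (0:ℝ)..1, φ' t := by
    rw [hFTC]
    norm_num
  have hsub : V (x + w) - V x - ⟪gradient V x, w⟫
      = ∫ t in (0:ℝ)..1, (φ' t - ⟪gradient V x, w⟫) := by
    rw [intervalIntegral.integral_sub (hcont.intervalIntegrable 0 1) intervalIntegrable_const,
      intervalIntegral.integral_const]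
    rw [hVal]
    norm_num
  rw [hsub]
  have hbound : ∀ᵐ t ∂(volume.restrict (Set.uIoc (0:ℝ) 1)),
      ‖φ' t - ⟪gradient V x, w⟫‖ ≤ L * ‖w‖ ^ 2 * t := by
    rw [Set.uIoc_of_le (by norm_num : (0:ℝ) ≤ 1)]
    filter_upwards [ae_restrict_mem measurableSet_Ioc] with t ht
    have h1 : φ' t - ⟪gradient V x, w⟫ = ⟪gradient V (x + t • w) - gradient V x, w⟫ := by
      rw [inner_sub_left]
    rw [Real.norm_eq_abs, h1]
    calc |⟪gradient V (x + t • w) - gradient V x, w⟫|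
        ≤ ‖gradient V (x + t • w) - gradient V x‖ * ‖w‖ := abs_real_inner_le_norm _ _
      _ ≤ (L * ‖x + t • w - x‖) * ‖w‖ :=
          mul_le_mul_of_nonneg_right (hlip _ _) (norm_nonneg w)
      _ = L * ‖w‖ ^ 2 * t := by
          rw [add_sub_cancel_left, norm_smul, Real.norm_eq_abs, abs_of_pos ht.1]
          ring
  have hIb : IntervalIntegrable (fun t : ℝ => L * ‖w‖ ^ 2 * t) volume 0 1 :=
    (continuous_const.mul continuous_id).intervalIntegrable 0 1
  have h := intervalIntegral.norm_integral_le_abs_of_norm_le hbound hIb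
  have hval2 : ∫ t in (0:ℝ)..1, L * ‖w‖ ^ 2 * t = L / 2 * ‖w‖ ^ 2 := by
    rw [intervalIntegral.integral_const_mul, integral_id]
    ring
  rw [hval2] at h
  calc |∫ t in (0:ℝ)..1, (φ' t - ⟪gradient V x, w⟫)|
      = ‖∫ t in (0:ℝ)..1, (φ' t - ⟪gradient V x, w⟫)‖ := (Real.norm_eq_abs _).symm
    _ ≤ |L / 2 * ‖w‖ ^ 2| := h
    _ = L / 2 * ‖w‖ ^ 2 := abs_of_nonneg (by positivity)

lemma pointwise_bound {d : ℕ} {L : ℝ} {V : EuclideanSpace ℝ (Fin d) → ℝ}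
    (hdiff : Differentiable ℝ V)
    (hlip : ∀ x y : EuclideanSpace ℝ (Fin d),
      ‖gradient V x - gradient V y‖ ≤ L * ‖x - y‖)
    (hL : 0 ≤ L) (θ : EuclideanSpace ℝ (Fin d)) {μ : ℝ} (hμ : 0 < μ)
    (v : EuclideanSpace ℝ (Fin d)) :
    |⟪gradient V θ, v⟫| - μ * L * ‖v‖ ^ 2
      ≤ Real.sign (V (θ + μ • v) - V θ) * ⟪gradient V θ, v⟫ := by
  set s := ⟪gradient V θ, v⟫ with hs
  set Δ := V (θ + μ • v) - V θ with hΔdef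
  have htay : |Δ - μ * s| ≤ L / 2 * (μ ^ 2 * ‖v‖ ^ 2) := by
    have h := taylor_bound hdiff hlip hL θ (μ • v)
    have h1 : ⟪gradient V θ, μ • v⟫ = μ * s := real_inner_smul_right _ _ _
    have h2 : ‖μ • v‖ ^ 2 = μ ^ 2 * ‖v‖ ^ 2 := by
      rw [norm_smul, mul_pow, Real.norm_eq_abs, sq_abs]
    rw [h1, h2] at h
    exact h
  have hLv : 0 ≤ μ * L * ‖v‖ ^ 2 := by positivity
  rcases eq_or_ne s 0 with hs0 | hs0
  · rw [hs0]
    simp only [mul_zero, abs_zero, zero_sub]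
    linarith
  by_cases hsgn : 0 < Δ * s
  · have hss : Real.sign Δ * s = |s| := by
      rcases lt_trichotomy s 0 with h | h | h
      · have hΔneg : Δ < 0 := by nlinarith
        rw [Real.sign_of_neg hΔneg, abs_of_neg h]; ring
      · exact absurd h hs0
      · have hΔpos : 0 < Δ := by nlinarith
        rw [Real.sign_of_pos hΔpos, abs_of_pos h]; ring
    rw [hss]
    linarith
  · push_neg at hsgn
    have hsb : μ * |s| ≤ L / 2 * (μ ^ 2 * ‖v‖ ^ 2) := by
      rcases lt_trichotomy s 0 with h | h | h
      · have hΔ0 : 0 ≤ Δ := by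
          by_contra hc
          push_neg at hc
          nlinarith
        calc μ * |s| = -(μ * s) := by rw [abs_of_neg h]; ring
          _ ≤ Δ - μ * s := by nlinarith
          _ ≤ |Δ - μ * s| := le_abs_self _
          _ ≤ _ := htay
      · exact absurd h hs0
      · have hΔ0 : Δ ≤ 0 := by
          by_contra hc
          push_neg at hc
          nlinarith
        calc μ * |s| = μ * s := by rw [abs_of_pos h]
          _ ≤ -(Δ - μ * s) := by nlinarith
          _ ≤ |Δ - μ * s| := neg_le_abs _
          _ ≤ _ := htay
    have habs : |s| ≤ L / 2 * (μ * ‖v‖ ^ 2) := by nlinarith [abs_nonneg s]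
    have hsign1 : |Real.sign Δ| ≤ 1 := by
      rcases Real.sign_apply_eq Δ with h | h | h <;> rw [h] <;> norm_num
    have h2 : |Real.sign Δ * s| ≤ |s| := by
      rw [abs_mul]
      nlinarith [abs_nonneg s]
    have h4 := (abs_le.mp h2).1
    linarith

end NegDrift

theorem stmt5 (d : ℕ) (L : ℝ) (V : EuclideanSpace ℝ (Fin d) → ℝ)
    (hdiff : Differentiable ℝ V)
    (hlip : ∀ x y : EuclideanSpace ℝ (Fin d),
      ‖gradient V x - gradient V y‖ ≤ L * ‖x - y‖)
    (θ : EuclideanSpace ℝ (Fin d)) (μ : ℝ) (hμ : 0 < μ) :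
    ∫ v, Real.sign (V (θ + μ • v) - V θ) * ⟪gradient V θ, v⟫ ∂(stdGaussian d)
      ≥ Real.sqrt (2 / Real.pi) * ‖gradient V θ‖ - μ * L * d := by
  rcases Nat.eq_zero_or_pos d with hd0 | hd
  · subst hd0
    have hg : gradient V θ = 0 := by
      ext i
      exact i.elim0
    have h0 : ∀ v : EuclideanSpace ℝ (Fin 0),
        Real.sign (V (θ + μ • v) - V θ) * ⟪gradient V θ, v⟫ = 0 := by
      intro v
      rw [hg, inner_zero_left, mul_zero]
    simp only [h0, integral_zero]
    rw [hg]
    simp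
  · have hL : 0 ≤ L := by
      have h := hlip (θ + EuclideanSpace.single ⟨0, hd⟩ (1 : ℝ)) θ
      rw [add_sub_cancel_left, EuclideanSpace.norm_single, norm_one, mul_one] at h
      linarith [norm_nonneg
        (gradient V (θ + EuclideanSpace.single ⟨0, hd⟩ (1 : ℝ)) - gradient V θ)]
    set g := gradient V θ with hgdef
    have hmg : AEStronglyMeasurable
        (fun v : EuclideanSpace ℝ (Fin d) => Real.sign (V (θ + μ • v) - V θ) * ⟪g, v⟫)
        (stdGaussian d) := by
      apply Measurable.aestronglyMeasurable
      apply Measurable.mul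
      · exact NegDrift.measurable_realSign.comp
          ((hdiff.continuous.comp
            (continuous_const.add (continuous_id.const_smul μ))).sub
              continuous_const).measurable
      · exact (Continuous.inner continuous_const continuous_id).measurable
    have hbnd : Integrable (fun v : EuclideanSpace ℝ (Fin d) => ‖g‖ * (1 + ‖v‖ ^ 2))
        (stdGaussian d) :=
      (((integrable_const (1 : ℝ)).add (NegDrift.integrable_norm_sq_std d)).const_mul ‖g‖)
    have hvb : ∀ v : EuclideanSpace ℝ (Fin d), |⟪g, v⟫| ≤ ‖g‖ * (1 + ‖v‖ ^ 2) := by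
      intro v
      calc |⟪g, v⟫| ≤ ‖g‖ * ‖v‖ := abs_real_inner_le_norm _ _
        _ ≤ ‖g‖ * (1 + ‖v‖ ^ 2) := by nlinarith [norm_nonneg v, norm_nonneg g, sq_nonneg (‖v‖ - 1)]
    have hIntMain : Integrable (fun v : EuclideanSpace ℝ (Fin d) =>
        Real.sign (V (θ + μ • v) - V θ) * ⟪g, v⟫) (stdGaussian d) := by
      refine Integrable.mono' hbnd hmg (Filter.Eventually.of_forall fun v => ?_)
      rw [Real.norm_eq_abs, abs_mul]
      have h1 : |Real.sign (V (θ + μ • v) - V θ)| ≤ 1 := by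
        rcases Real.sign_apply_eq (V (θ + μ • v) - V θ) with h | h | h <;> rw [h] <;> norm_num
      calc |Real.sign (V (θ + μ • v) - V θ)| * |⟪g, v⟫| ≤ 1 * |⟪g, v⟫| :=
            mul_le_mul_of_nonneg_right h1 (abs_nonneg _)
        _ = |⟪g, v⟫| := one_mul _
        _ ≤ _ := hvb v
    have hIntAbs : Integrable (fun v : EuclideanSpace ℝ (Fin d) => |⟪g, v⟫|) (stdGaussian d) := by
      refine Integrable.mono' hbnd ?_ (Filter.Eventually.of_forall fun v => ?_)
      · exact ((Continuous.inner continuous_const continuous_id).abs).aestronglyMeasurable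
      · rw [Real.norm_eq_abs, abs_abs]
        exact hvb v
    have hIntLow : Integrable (fun v : EuclideanSpace ℝ (Fin d) =>
        |⟪g, v⟫| - μ * L * ‖v‖ ^ 2) (stdGaussian d) :=
      hIntAbs.sub ((NegDrift.integrable_norm_sq_std d).const_mul (μ * L))
    have hpt : ∀ v : EuclideanSpace ℝ (Fin d),
        |⟪g, v⟫| - μ * L * ‖v‖ ^ 2 ≤ Real.sign (V (θ + μ • v) - V θ) * ⟪g, v⟫ :=
      fun v => NegDrift.pointwise_bound hdiff hlip hL θ hμ v
    have hmono := integral_mono hIntLow hIntMain hpt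
    have habs : ∫ v, |⟪g, v⟫| ∂(stdGaussian d) = Real.sqrt (2 / Real.pi) * ‖g‖ := by
      rcases eq_or_ne g 0 with hg0 | hg0
      · rw [hg0]
        simp
      · set u : EuclideanSpace ℝ (Fin d) := ‖g‖⁻¹ • g with hu
        have hgne : ‖g‖ ≠ 0 := norm_ne_zero_iff.mpr hg0
        have hnu : ‖u‖ = 1 := by
          rw [hu, norm_smul, norm_inv, norm_norm, inv_mul_cancel₀ hgne]
        set i0 : Fin d := ⟨0, hd⟩ with hi0
        have hortho : Orthonormal ℝ (({i0} : Set (Fin d)).restrict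
            (fun _ : Fin d => u)) := by
          constructor
          · intro i
            exact hnu
          · intro i j hij
            exact absurd (Subsingleton.elim i j) hij
        obtain ⟨b, hb⟩ := hortho.exists_orthonormalBasis_extension_of_card_eq
          (by simp [finrank_euclideanSpace_fin])
        have hbi0 : b i0 = u := hb i0 rfl
        have hgv : ∀ v : EuclideanSpace ℝ (Fin d), ⟪g, v⟫ = ‖g‖ * (b.repr v i0) := by
          intro v
          rw [OrthonormalBasis.repr_apply_apply, hbi0, hu, real_inner_smul_left,
            ← mul_assoc, mul_inv_cancel₀ hgne, one_mul]
        simp_rw [hgv, abs_mul, abs_of_nonneg (norm_nonneg g)]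
        rw [MeasureTheory.integral_const_mul]
        have hrot := NegDrift.rot_inv d b.repr (fun w => |w i0|)
        rw [hrot, NegDrift.integral_abs_coord d i0]
        ring
    have hlow : ∫ v, (|⟪g, v⟫| - μ * L * ‖v‖ ^ 2) ∂(stdGaussian d)
        = Real.sqrt (2 / Real.pi) * ‖g‖ - μ * L * d := by
      rw [integral_sub hIntAbs ((NegDrift.integrable_norm_sq_std d).const_mul (μ * L)), habs,
        MeasureTheory.integral_const_mul, NegDrift.integral_norm_sq_std d]
    rw [ge_iff_le, ← hlow]
    exact hmono
end

section
/- (Bound on the attenuated gradient moment.) Let d ≥ 1, let v be distributed according to the standard Gaussian measure N(0, I_d) on ℝ^d, let g ∈ ℝ^d, let μ > 0, let N ≥ 1, and let ς : ℝ → ℝ be nondecreasing with ς(0) = 0. Suppose s ≥ 0 satisfies ς(μs/4)² ≥ 2/N. Then E_v[ exp( −(N/2) · ς( μ|⟨g, v⟩|/4 )² ) · |⟨g, v⟩| ] ≤ s + (1/e) · √(2/π) · ‖g‖₂. -/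
open MeasureTheory ProbabilityTheory RealInnerProductSpace

open Real
open scoped NNReal ENNReal

namespace My

lemma pdf_conv (v₁ v₂ : ℝ≥0) (h₁ : v₁ ≠ 0) (h₂ : v₂ ≠ 0) (z : ℝ) :
    ∫ y, gaussianPDFReal 0 v₁ (z - y) * gaussianPDFReal 0 v₂ y
      = gaussianPDFReal 0 (v₁ + v₂) z := by
  have ha : (0:ℝ) < v₁ := lt_of_le_of_ne v₁.coe_nonneg (by exact_mod_cast (Ne.symm h₁))
  have hb : (0:ℝ) < v₂ := lt_of_le_of_ne v₂.coe_nonneg (by exact_mod_cast (Ne.symm h₂))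
  set a : ℝ := (v₁ : ℝ) with hadef
  set b : ℝ := (v₂ : ℝ) with hbdef
  have hab : (0:ℝ) < a + b := by linarith
  set k : ℝ := (a + b) / (2 * a * b) with hk
  have hkpos : 0 < k := by positivity
  set c : ℝ := b * z / (a + b) with hc
  have key : ∀ y : ℝ, gaussianPDFReal 0 v₁ (z - y) * gaussianPDFReal 0 v₂ y
      = ((√(2 * π * a))⁻¹ * (√(2 * π * b))⁻¹ * rexp (- z ^ 2 / (2 * (a + b))))
        * rexp (- k * (y - c) ^ 2) := by
    intro y
    simp only [gaussianPDFReal, sub_zero]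
    rw [mul_mul_mul_comm, ← Real.exp_add,
      mul_assoc ((√(2 * π * a))⁻¹ * (√(2 * π * b))⁻¹), ← Real.exp_add]
    rw [← hadef, ← hbdef]
    congr 1
    rw [Real.exp_eq_exp]
    rw [hk, hc]
    field_simp
    ring
  rw [funext key, integral_const_mul]
  have hI : ∫ y : ℝ, rexp (-k * (y - c) ^ 2) = √(π / k) := by
    rw [integral_sub_right_eq_self (fun y => rexp (-k * y ^ 2)) c, integral_gaussian]
  rw [hI]
  simp only [gaussianPDFReal, sub_zero]
  have hconst : (√(2 * π * a))⁻¹ * (√(2 * π * b))⁻¹ * √(π / k)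
      = (√(2 * π * (a + b)))⁻¹ := by
    rw [← Real.sqrt_inv, ← Real.sqrt_inv, ← Real.sqrt_mul (by positivity),
      ← Real.sqrt_mul (by positivity), ← Real.sqrt_inv]
    congr 1
    field_simp [hk]
    rw [hk]
    field_simp
  push_cast
  rw [← hadef, ← hbdef]
  linear_combination rexp (-z ^ 2 / (2 * (a + b))) * hconst


lemma gaussianPDF_lintegral_conv (v₁ v₂ : ℝ≥0) (h₁ : v₁ ≠ 0) (h₂ : v₂ ≠ 0) (z : ℝ) :
    ∫⁻ x, gaussianPDF 0 v₁ x * gaussianPDF 0 v₂ (z - x) = gaussianPDF 0 (v₁ + v₂) z := by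
  have hb : (0:ℝ) < v₂ := lt_of_le_of_ne v₂.coe_nonneg (by exact_mod_cast (Ne.symm h₂))
  have hmeas : Measurable fun x => gaussianPDFReal 0 v₁ x * gaussianPDFReal 0 v₂ (z - x) :=
    (measurable_gaussianPDFReal 0 v₁).mul
      ((measurable_gaussianPDFReal 0 v₂).comp (measurable_const.sub measurable_id))
  have hint : Integrable (fun x => gaussianPDFReal 0 v₁ x * gaussianPDFReal 0 v₂ (z - x)) := by
    refine Integrable.mono' ((integrable_gaussianPDFReal 0 v₁).const_mul ((√(2 * π * v₂))⁻¹))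
      hmeas.aestronglyMeasurable (Filter.Eventually.of_forall fun x => ?_)
    rw [Real.norm_eq_abs, abs_of_nonneg (mul_nonneg (gaussianPDFReal_nonneg _ _ _)
      (gaussianPDFReal_nonneg _ _ _)), mul_comm ((√(2 * π * (v₂:ℝ)))⁻¹)]
    refine mul_le_mul_of_nonneg_left ?_ (gaussianPDFReal_nonneg _ _ _)
    rw [gaussianPDFReal]
    nth_rewrite 2 [← mul_one ((√(2 * π * (v₂:ℝ)))⁻¹)]
    refine mul_le_mul_of_nonneg_left ?_ (by positivity)
    exact Real.exp_le_one_iff.mpr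
      (div_nonpos_of_nonpos_of_nonneg (neg_nonpos.mpr (sq_nonneg _)) (by positivity))
  calc ∫⁻ x, gaussianPDF 0 v₁ x * gaussianPDF 0 v₂ (z - x)
      = ∫⁻ x, ENNReal.ofReal (gaussianPDFReal 0 v₁ x * gaussianPDFReal 0 v₂ (z - x)) := by
        simp_rw [gaussianPDF, ENNReal.ofReal_mul (gaussianPDFReal_nonneg 0 v₁ _)]
    _ = ENNReal.ofReal (∫ x, gaussianPDFReal 0 v₁ x * gaussianPDFReal 0 v₂ (z - x)) := by
        rw [← ofReal_integral_eq_lintegral_ofReal hint (Filter.Eventually.of_forall fun x =>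
          mul_nonneg (gaussianPDFReal_nonneg _ _ _) (gaussianPDFReal_nonneg _ _ _))]
    _ = ENNReal.ofReal (∫ y, gaussianPDFReal 0 v₁ (z - y) * gaussianPDFReal 0 v₂ y) := by
        rw [← integral_sub_left_eq_self
          (fun y => gaussianPDFReal 0 v₁ (z - y) * gaussianPDFReal 0 v₂ y) volume z]
        simp
    _ = gaussianPDF 0 (v₁ + v₂) z := by rw [pdf_conv v₁ v₂ h₁ h₂ z]; rfl

lemma gaussian_conv (v₁ v₂ : ℝ≥0) :
    Measure.map (fun p : ℝ × ℝ => p.1 + p.2)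
      ((gaussianReal 0 v₁).prod (gaussianReal 0 v₂)) = gaussianReal 0 (v₁ + v₂) := by
  by_cases h₁ : v₁ = 0
  · subst h₁
    rw [gaussianReal_zero_var, Measure.dirac_prod, zero_add,
      Measure.map_map measurable_add measurable_prodMk_left]
    simp only [Function.comp_def, zero_add]
    exact Measure.map_id
  by_cases h₂ : v₂ = 0
  · subst h₂
    rw [gaussianReal_zero_var, Measure.prod_dirac, add_zero,
      Measure.map_map measurable_add measurable_prodMk_right]
    simp only [Function.comp_def, add_zero]
    exact Measure.map_id
  have hsum : v₁ + v₂ ≠ 0 := by simp [h₁]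
  ext s hs
  rw [Measure.map_apply measurable_add hs,
    gaussianReal_of_var_ne_zero _ hsum, withDensity_apply _ hs,
    gaussianReal_of_var_ne_zero _ h₁, gaussianReal_of_var_ne_zero _ h₂]
  have hps : MeasurableSet ((fun p : ℝ × ℝ => p.1 + p.2) ⁻¹' s) := measurable_add hs
  rw [Measure.prod_apply hps]
  have hf2 : ∀ x : ℝ, Measurable fun z : ℝ => gaussianPDF 0 v₂ (z - x) := fun x =>
    (measurable_gaussianPDF 0 v₂).comp (measurable_id.sub measurable_const)
  have step1 : ∀ x : ℝ,
      (volume.withDensity (gaussianPDF 0 v₂)) (Prod.mk x ⁻¹' ((fun p : ℝ × ℝ => p.1 + p.2) ⁻¹' s))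
        = ∫⁻ z in s, gaussianPDF 0 v₂ (z - x) := by
    intro x
    have hpre : (Prod.mk x ⁻¹' ((fun p : ℝ × ℝ => p.1 + p.2) ⁻¹' s))
        = (fun y => x + y) ⁻¹' s := rfl
    rw [hpre, withDensity_apply _ (measurable_const_add x hs)]
    calc ∫⁻ y in (fun y => x + y) ⁻¹' s, gaussianPDF 0 v₂ y
        = ∫⁻ y in (fun y => x + y) ⁻¹' s, gaussianPDF 0 v₂ (x + y - x) := by simp
      _ = ∫⁻ z in s, gaussianPDF 0 v₂ (z - x) := by
          rw [← setLIntegral_map hs (hf2 x) (measurable_const_add x),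
            map_add_left_eq_self volume x]
  simp_rw [step1]
  have hmeas2 : Measurable fun p : ℝ × ℝ => gaussianPDF 0 v₂ (p.2 - p.1) :=
    (measurable_gaussianPDF 0 v₂).comp (measurable_snd.sub measurable_fst)
  rw [lintegral_withDensity_eq_lintegral_mul _ (measurable_gaussianPDF 0 v₁)
    (Measurable.lintegral_prod_right' (ν := volume.restrict s) hmeas2)]
  simp only [Pi.mul_apply]
  calc ∫⁻ x, gaussianPDF 0 v₁ x * ∫⁻ z in s, gaussianPDF 0 v₂ (z - x)
      = ∫⁻ x, ∫⁻ z in s, gaussianPDF 0 v₁ x * gaussianPDF 0 v₂ (z - x) := by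
        simp_rw [lintegral_const_mul _ (hf2 _)]
    _ = ∫⁻ z in s, ∫⁻ x, gaussianPDF 0 v₁ x * gaussianPDF 0 v₂ (z - x) := by
        rw [lintegral_lintegral_swap]
        exact ((measurable_gaussianPDF 0 v₁).comp measurable_fst).mul
          ((measurable_gaussianPDF 0 v₂).comp (measurable_snd.sub measurable_fst))
          |>.aemeasurable
    _ = ∫⁻ z in s, gaussianPDF 0 (v₁ + v₂) z := by
        refine setLIntegral_congr_fun hs (fun z _ => ?_)
        exact gaussianPDF_lintegral_conv v₁ v₂ h₁ h₂ z


lemma map_sum_pi : ∀ (n : ℕ) (g : Fin n → ℝ),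
    Measure.map (fun x : Fin n → ℝ => ∑ i, g i * x i)
      (Measure.pi fun _ => gaussianReal 0 1)
      = gaussianReal 0 (∑ i, (⟨g i ^ 2, sq_nonneg _⟩ : ℝ≥0)) := by
  intro n
  induction n with
  | zero =>
    intro g
    simp only [Finset.univ_eq_empty, Finset.sum_empty]
    rw [show (fun x : Fin 0 → ℝ => (0:ℝ)) = (fun _ => 0) from rfl, Measure.map_const,
      measure_univ, one_smul]
    exact (gaussianReal_zero_var 0).symm
  | succ n ih =>
    intro g
    have mp := measurePreserving_piFinSuccAbove (fun _ : Fin (n+1) => gaussianReal 0 1) 0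
    set e := MeasurableEquiv.piFinSuccAbove (fun _ : Fin (n+1) => ℝ) 0 with he
    have hfun : (fun x : Fin (n+1) → ℝ => ∑ i, g i * x i)
        = (fun p : ℝ × (Fin n → ℝ) => g 0 * p.1 + ∑ j : Fin n, g j.succ * p.2 j) ∘ e := by
      funext x
      simp only [Function.comp_apply, he, MeasurableEquiv.piFinSuccAbove]
      rw [Fin.sum_univ_succ]
      congr 1
    have hmeas2 : Measurable fun y : Fin n → ℝ => ∑ j : Fin n, g j.succ * y j :=
      Finset.measurable_sum _ fun j _ => (measurable_pi_apply j).const_mul _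
    have hmeasG : Measurable fun p : ℝ × (Fin n → ℝ) =>
        g 0 * p.1 + ∑ j : Fin n, g j.succ * p.2 j :=
      (measurable_fst.const_mul _).add (hmeas2.comp measurable_snd)
    rw [hfun, ← Measure.map_map hmeasG e.measurable, mp.map_eq]
    have hdecomp : (fun p : ℝ × (Fin n → ℝ) => g 0 * p.1 + ∑ j : Fin n, g j.succ * p.2 j)
        = (fun q : ℝ × ℝ => q.1 + q.2) ∘
          (Prod.map (fun t : ℝ => g 0 * t) (fun y : Fin n → ℝ => ∑ j : Fin n, g j.succ * y j)) := rfl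
    rw [hdecomp, ← Measure.map_map measurable_add
      ((measurable_const_mul _).prodMap hmeas2),
      ← Measure.map_prod_map _ _ (measurable_const_mul _) hmeas2,
      gaussianReal_map_const_mul, ih (fun j => g j.succ), mul_zero, mul_one, gaussian_conv]
    congr 1
    exact (Fin.sum_univ_succ (f := fun i => (⟨g i ^ 2, sq_nonneg _⟩ : ℝ≥0))).symm


lemma integral_Ioi_mul_exp {b : ℝ} (hb : 0 < b) :
    ∫ x in Set.Ioi (0:ℝ), x * rexp (-b * x ^ 2) = (2 * b)⁻¹ := by
  have A : ∀ x : ℝ, HasDerivAt (fun x : ℝ => -(2 * b)⁻¹ * rexp (-b * x ^ 2))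
      (x * rexp (-b * x ^ 2)) x := by
    intro x
    convert (((hasDerivAt_pow 2 x).const_mul (-b)).exp.const_mul (-(2 * b)⁻¹)) using 1
    · rfl
    · rfl
    field_simp
    ring
  have B : Filter.Tendsto (fun y : ℝ => -(2 * b)⁻¹ * rexp (-b * y ^ 2))
      Filter.atTop (nhds (-(2 * b)⁻¹ * 0)) := by
    refine Filter.Tendsto.const_mul _ ?_
    exact Real.tendsto_exp_atBot.comp
      ((Filter.tendsto_pow_atTop two_ne_zero).const_mul_atTop_of_neg (neg_lt_zero.2 hb))
  convert integral_Ioi_of_hasDerivAt_of_tendsto' (fun x _ => A x)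
    (integrable_mul_exp_neg_mul_sq hb).integrableOn B using 1
  simp

lemma integrable_abs_std : Integrable (fun x => |x|) (gaussianReal 0 1) := by
  rw [gaussianReal_of_var_ne_zero 0 one_ne_zero,
    integrable_withDensity_iff (measurable_gaussianPDF 0 1)
      (Filter.Eventually.of_forall fun x => ENNReal.ofReal_lt_top)]
  have : (fun x : ℝ => |x| * (gaussianPDF 0 1 x).toReal)
      = fun x => (√(2 * π))⁻¹ * |x * rexp (-(2:ℝ)⁻¹ * x ^ 2)| := by
    funext x
    rw [gaussianPDF, ENNReal.toReal_ofReal (gaussianPDFReal_nonneg _ _ _), gaussianPDFReal]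
    rw [abs_mul, abs_of_nonneg (Real.exp_pos _).le]
    push_cast
    rw [sub_zero]
    ring_nf
  rw [this]
  exact ((integrable_mul_exp_neg_mul_sq (by norm_num : (0:ℝ) < 2⁻¹)).abs).const_mul _

lemma abs_moment_std : ∫ x, |x| ∂(gaussianReal 0 1) = √(2 / π) := by
  rw [gaussianReal_of_var_ne_zero 0 one_ne_zero]
  rw [show (volume : Measure ℝ).withDensity (gaussianPDF 0 1)
      = (volume : Measure ℝ).withDensity (fun x => ((gaussianPDFReal 0 1 x).toNNReal : ℝ≥0∞))
    from rfl]
  rw [integral_withDensity_eq_integral_smul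
    (f := fun x => (gaussianPDFReal 0 1 x).toNNReal)
    ((measurable_gaussianPDFReal 0 1).real_toNNReal) (fun x => |x|)]
  have : (fun x : ℝ => (gaussianPDFReal 0 1 x).toNNReal • |x|)
      = fun x => (√(2 * π))⁻¹ * ((fun t => t * rexp (-(2:ℝ)⁻¹ * t ^ 2)) |x|) := by
    funext x
    rw [NNReal.smul_def, Real.coe_toNNReal _ (gaussianPDFReal_nonneg _ _ _),
      smul_eq_mul, gaussianPDFReal]
    push_cast
    rw [sub_zero, sq_abs]
    ring_nf
  rw [this, integral_const_mul, integral_comp_abs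
    (f := fun t => t * rexp (-(2:ℝ)⁻¹ * t ^ 2)), integral_Ioi_mul_exp (by norm_num)]
  rw [show ((2:ℝ) * 2⁻¹)⁻¹ = 1 by norm_num, mul_one]
  have hπ : (0:ℝ) < √π := Real.sqrt_pos.mpr Real.pi_pos
  have h2 : (0:ℝ) < √2 := Real.sqrt_pos.mpr two_pos
  have hss : √2 * √2 = 2 := Real.mul_self_sqrt (by norm_num)
  rw [Real.sqrt_mul (by norm_num : (0:ℝ) ≤ 2) π, Real.sqrt_div (by norm_num : (0:ℝ) ≤ 2) π, div_eq_mul_inv, mul_inv]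
  field_simp
  rw [Real.sq_sqrt (by norm_num)]


lemma gaussianV_eq_map (V : ℝ≥0) :
    gaussianReal 0 V = (gaussianReal 0 1).map (fun x => √(V:ℝ) * x) := by
  rw [show (fun x : ℝ => √(V:ℝ) * x) = (√(V:ℝ) * ·) from rfl, gaussianReal_map_const_mul]
  congr 1
  · ring
  · ext
    push_cast
    rw [Real.sq_sqrt V.coe_nonneg, mul_one]

lemma abs_moment (V : ℝ≥0) : ∫ x, |x| ∂(gaussianReal 0 V) = √(2 / π) * √(V:ℝ) := by
  rw [gaussianV_eq_map V, integral_map (measurable_const_mul _).aemeasurable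
    measurable_abs.aestronglyMeasurable]
  simp_rw [abs_mul, abs_of_nonneg (Real.sqrt_nonneg (V:ℝ))]
  rw [integral_const_mul, abs_moment_std]
  ring

lemma integrable_abs_gaussian (V : ℝ≥0) : Integrable (fun x => |x|) (gaussianReal 0 V) := by
  rw [gaussianV_eq_map V,
    integrable_map_measure measurable_abs.aestronglyMeasurable
      (measurable_const_mul _).aemeasurable]
  have : ((fun x : ℝ => |x|) ∘ fun x => √(V:ℝ) * x) = fun x => |√(V:ℝ)| * |x| := by
    funext x; simp [Function.comp, abs_mul]
  rw [this]
  exact integrable_abs_std.const_mul _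

lemma stdGaussian_map_inner (d : ℕ) (g : EuclideanSpace ℝ (Fin d)) :
    Measure.map (fun v => ⟪g, v⟫) (stdGaussian d)
      = gaussianReal 0 (∑ i, (⟨g i ^ 2, sq_nonneg _⟩ : ℝ≥0)) := by
  have hT : Measurable fun v : EuclideanSpace ℝ (Fin d) => ⟪g, v⟫ :=
    (continuous_const.inner continuous_id).measurable
  rw [_root_.stdGaussian, Measure.map_map hT (MeasurableEquiv.toLp 2 (Fin d → ℝ)).measurable]
  have : ((fun v : EuclideanSpace ℝ (Fin d) => ⟪g, v⟫) ∘
      (MeasurableEquiv.toLp 2 (Fin d → ℝ))) = fun x : Fin d → ℝ => ∑ i, g i * x i := by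
    funext x
    simp [Function.comp, PiLp.inner_apply, RCLike.inner_apply, mul_comm]
  rw [this, map_sum_pi]

lemma norm_eq_sqrt_sum (d : ℕ) (g : EuclideanSpace ℝ (Fin d)) :
    ‖g‖ = √((∑ i, (⟨g i ^ 2, sq_nonneg _⟩ : ℝ≥0) : ℝ≥0) : ℝ) := by
  rw [EuclideanSpace.norm_eq]
  congr 1
  push_cast
  rw [NNReal.coe_sum (f := fun i => (⟨g i ^ 2, sq_nonneg _⟩ : ℝ≥0))]
  congr 1
  funext i
  rw [Real.norm_eq_abs, sq_abs]
  rfl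


end My

theorem stmt9 (d N : ℕ) (hd : 1 ≤ d) (hN : 1 ≤ N)
    (g : EuclideanSpace ℝ (Fin d)) (μ : ℝ) (hμ : 0 < μ)
    (ς : ℝ → ℝ) (hmono : Monotone ς) (hzero : ς 0 = 0)
    (s : ℝ) (hs : 0 ≤ s) (hsN : ς (μ * s / 4) ^ 2 ≥ 2 / N) :
    ∫ v, Real.exp (-((N : ℝ) / 2) * ς (μ * |⟪g, v⟫| / 4) ^ 2) * |⟪g, v⟫|
        ∂(stdGaussian d)
      ≤ s + 1 / Real.exp 1 * Real.sqrt (2 / Real.pi) * ‖g‖ := by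
  have hT : Measurable fun v : EuclideanSpace ℝ (Fin d) => ⟪g, v⟫ :=
    (continuous_const.inner continuous_id).measurable
  set V : ℝ≥0 := ∑ i, (⟨g i ^ 2, sq_nonneg _⟩ : ℝ≥0) with hV
  have hlaw := My.stdGaussian_map_inner d g
  haveI : IsProbabilityMeasure (stdGaussian d) :=
    Measure.isProbabilityMeasure_map (MeasurableEquiv.toLp 2 (Fin d → ℝ)).measurable.aemeasurable
  have hInt : Integrable (fun v => |⟪g, v⟫|) (stdGaussian d) := by
    have := (integrable_map_measure measurable_abs.aestronglyMeasurable hT.aemeasurable).mp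
      (by rw [hlaw]; exact My.integrable_abs_gaussian V)
    exact this
  have hmoment : ∫ v, |⟪g, v⟫| ∂(stdGaussian d) = √(2 / π) * ‖g‖ := by
    have := integral_map hT.aemeasurable measurable_abs.aestronglyMeasurable
      (μ := stdGaussian d) (f := fun x : ℝ => |x|)
    rw [hlaw] at this
    rw [← this, My.abs_moment V, My.norm_eq_sqrt_sum d g]
  have hNpos : (0:ℝ) < N := by exact_mod_cast hN
  -- pointwise bound
  have hpt : ∀ t : ℝ, rexp (-((N : ℝ) / 2) * ς (μ * |t| / 4) ^ 2) * |t|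
      ≤ s + 1 / rexp 1 * |t| := by
    intro t
    have hς0 : 0 ≤ ς (μ * s / 4) := by
      rw [← hzero]; exact hmono (by positivity)
    by_cases h : |t| ≤ s
    · have h1 : rexp (-((N : ℝ) / 2) * ς (μ * |t| / 4) ^ 2) ≤ 1 := by
        rw [Real.exp_le_one_iff]
        have : (0:ℝ) ≤ ((N : ℝ) / 2) * ς (μ * |t| / 4) ^ 2 := by positivity
        linarith
      calc rexp (-((N : ℝ) / 2) * ς (μ * |t| / 4) ^ 2) * |t|
          ≤ 1 * |t| := mul_le_mul_of_nonneg_right h1 (abs_nonneg t)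
        _ = |t| := one_mul _
        _ ≤ s := h
        _ ≤ s + 1 / rexp 1 * |t| := le_add_of_nonneg_right (by positivity)
    · push_neg at h
      have hle : ς (μ * s / 4) ≤ ς (μ * |t| / 4) := by
        apply hmono
        have : μ * s ≤ μ * |t| := mul_le_mul_of_nonneg_left h.le hμ.le
        linarith
      have hsq : 2 / (N:ℝ) ≤ ς (μ * |t| / 4) ^ 2 :=
        le_trans hsN (pow_le_pow_left₀ hς0 hle 2)
      have harg : -((N : ℝ) / 2) * ς (μ * |t| / 4) ^ 2 ≤ -1 := by
        have h2 : ((N:ℝ) / 2) * (2 / N) ≤ ((N:ℝ) / 2) * ς (μ * |t| / 4) ^ 2 :=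
          mul_le_mul_of_nonneg_left hsq (by positivity)
        have h3 : ((N:ℝ) / 2) * (2 / N) = 1 := by field_simp
        nlinarith
      have h1 : rexp (-((N : ℝ) / 2) * ς (μ * |t| / 4) ^ 2) ≤ 1 / rexp 1 := by
        rw [one_div, ← Real.exp_neg]
        exact Real.exp_le_exp.mpr harg
      calc rexp (-((N : ℝ) / 2) * ς (μ * |t| / 4) ^ 2) * |t|
          ≤ 1 / rexp 1 * |t| := mul_le_mul_of_nonneg_right h1 (abs_nonneg t)
        _ ≤ s + 1 / rexp 1 * |t| := le_add_of_nonneg_left hs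
  have hbound : Integrable (fun v => s + 1 / rexp 1 * |⟪g, v⟫|) (stdGaussian d) :=
    (integrable_const s).add (hInt.const_mul _)
  calc ∫ v, rexp (-((N : ℝ) / 2) * ς (μ * |⟪g, v⟫| / 4) ^ 2) * |⟪g, v⟫| ∂(stdGaussian d)
      ≤ ∫ v, (s + 1 / rexp 1 * |⟪g, v⟫|) ∂(stdGaussian d) := by
        refine integral_mono_of_nonneg (Filter.Eventually.of_forall fun v => ?_) hbound
          (Filter.Eventually.of_forall fun v => hpt _)
        positivity
    _ = s + 1 / rexp 1 * (√(2 / π) * ‖g‖) := by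
        rw [integral_add (integrable_const s) (hInt.const_mul _), integral_const,
          probReal_univ, smul_eq_mul, one_mul, integral_const_mul, hmoment]
    _ = s + 1 / rexp 1 * √(2 / π) * ‖g‖ := by ring
end

section
/- (Batch distinguishability bound; abstract form of Proposition 1.) Let D ≥ 1, H > 0, and let ς : ℝ → ℝ be a deviation function with ς(H/√D) > 0. Define ε₀ = (4H/√D) · √( 2 log( 2 / ς(H/√D) ) ). Let X₁, …, X_D be i.i.d. random variables in [0, H] with mean m₁ and Y₁, …, Y_D be i.i.d. random variables in [0, H] with mean m₀, with the two samples independent, and set X̄ = (1/D)∑ X_i, Ȳ = (1/D)∑ Y_i. If m₁ − m₀ ≥ ε₀, then E[ ς( X̄ − Ȳ ) ] ≥ (1/2) · ς( (m₁ − m₀)/2 ). -/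
set_option maxHeartbeats 1000000

open MeasureTheory

section AuxLemmas
open Real


lemma sinh_aux : ∀ x : ℝ, 0 ≤ x → exp x - exp (-x) ≤ x * (exp x + exp (-x)) := by
  have key : MonotoneOn (fun x : ℝ => x * (exp x + exp (-x)) - (exp x - exp (-x))) (Set.Ici 0) := by
    apply monotoneOn_of_deriv_nonneg (convex_Ici 0)
    · fun_prop
    · apply Differentiable.differentiableOn; fun_prop
    · intro x hx
      rw [interior_Ici] at hx
      have h1 : HasDerivAt (fun x : ℝ => exp x + exp (-x)) (exp x - exp (-x)) x := by
        have := (Real.hasDerivAt_exp x).add (((Real.hasDerivAt_exp (-x)).comp x (hasDerivAt_neg x)))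
        exact this.congr_deriv (by ring)
      have h2 : HasDerivAt (fun x : ℝ => exp x - exp (-x)) (exp x + exp (-x)) x := by
        have := (Real.hasDerivAt_exp x).sub (((Real.hasDerivAt_exp (-x)).comp x (hasDerivAt_neg x)))
        exact this.congr_deriv (by ring)
      have h3 : HasDerivAt (fun x : ℝ => x * (exp x + exp (-x)) - (exp x - exp (-x)))
          (x * (exp x - exp (-x))) x := by
        have := ((hasDerivAt_id x).mul h1).sub h2
        exact this.congr_deriv (by simp only [id]; ring)
      rw [h3.deriv]
      have : exp (-x) ≤ exp x := exp_le_exp.2 (by linarith [(show (0:ℝ) < x from hx).le])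
      nlinarith [(show (0:ℝ) < x from hx).le]
  intro x hx
  have := key (Set.self_mem_Ici (a := (0:ℝ))) hx hx
  simp at this
  linarith

lemma cosh_le_exp_sq (u : ℝ) : (exp u + exp (-u)) / 2 ≤ exp (u ^ 2 / 2) := by
  have main : ∀ x : ℝ, 0 ≤ x → (exp x + exp (-x)) / 2 ≤ exp (x ^ 2 / 2) := by
    have key : MonotoneOn (fun x : ℝ => x ^ 2 / 2 - Real.log ((exp x + exp (-x)) / 2))
        (Set.Ici 0) := by
      apply monotoneOn_of_deriv_nonneg (convex_Ici 0)
      · apply Continuous.continuousOn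
        have hpos : ∀ x : ℝ, (0:ℝ) < (exp x + exp (-x)) / 2 := fun x => by positivity
        fun_prop (disch := intro x; exact (hpos x).ne')
      · apply DifferentiableOn.sub
        · apply Differentiable.differentiableOn; fun_prop
        · intro x hx
          apply DifferentiableAt.differentiableWithinAt
          apply DifferentiableAt.log
          · fun_prop
          · positivity
      · intro x hx
        rw [interior_Ici] at hx
        have h1 : HasDerivAt (fun x : ℝ => (exp x + exp (-x)) / 2) ((exp x - exp (-x)) / 2) x := by
          have := ((Real.hasDerivAt_exp x).add (((Real.hasDerivAt_exp (-x)).comp x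
            (hasDerivAt_neg x)))).div_const 2
          exact this.congr_deriv (by ring)
        have hA : (0:ℝ) < (exp x + exp (-x)) / 2 := by positivity
        have h2 : HasDerivAt (fun x : ℝ => x ^ 2 / 2 - Real.log ((exp x + exp (-x)) / 2))
            (x - ((exp x - exp (-x)) / 2) / ((exp x + exp (-x)) / 2)) x := by
          have := ((hasDerivAt_pow 2 x).div_const 2).sub (h1.log hA.ne')
          exact this.congr_deriv (by rw [show (2:ℕ) - 1 = 1 from rfl, pow_one]; push_cast; ring)
        rw [h2.deriv, sub_nonneg, div_le_iff₀ hA]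
        have := sinh_aux x hx.le
        linarith
    intro x hx
    have h0 := key (Set.self_mem_Ici (a := (0:ℝ))) hx hx
    simp at h0
    have hA : (0:ℝ) < (exp x + exp (-x)) / 2 := by positivity
    calc (exp x + exp (-x)) / 2 = exp (Real.log ((exp x + exp (-x)) / 2)) := (exp_log hA).symm
      _ ≤ exp (x ^ 2 / 2) := exp_le_exp.2 (by linarith)
  rcases le_or_gt 0 u with h | h
  · exact main u h
  · have := main (-u) (by linarith)
    simpa [neg_neg, add_comm, neg_sq] using this

lemma mgf_bound (μ : Measure ℝ) [IsProbabilityMeasure μ] {H : ℝ} (hH : 0 < H)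
    (hrange : ∀ᵐ x ∂μ, x ∈ Set.Icc 0 H) {m : ℝ} (hm : ∫ x, x ∂μ = m) (u : ℝ) :
    Integrable (fun x => Real.exp (u * (x - m))) μ ∧
    ∫ x, Real.exp (u * (x - m)) ∂μ ≤ Real.exp (u ^ 2 * H ^ 2 / 2) := by
  have hid : Integrable (fun x : ℝ => x) μ := by
    apply Integrable.mono' (integrable_const H) measurable_id.aestronglyMeasurable
    filter_upwards [hrange] with x hx
    simp only [Set.mem_Icc] at hx
    rw [Real.norm_eq_abs, abs_le]
    simp only [id_eq]
    exact ⟨by linarith [hx.1], hx.2⟩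
  have hm0 : 0 ≤ m := by
    rw [← hm]; exact integral_nonneg_of_ae (by filter_upwards [hrange] with x hx using hx.1)
  have hmH : m ≤ H := by
    rw [← hm]
    calc ∫ x, x ∂μ ≤ ∫ _, H ∂μ :=
          integral_mono_ae hid (integrable_const H) (by filter_upwards [hrange] with x hx using hx.2)
      _ = H := by simp
  have hdev : ∀ᵐ x ∂μ, |x - m| ≤ H := by
    filter_upwards [hrange] with x hx
    simp only [Set.mem_Icc] at hx
    rw [abs_le]; exact ⟨by linarith [hx.1], by linarith [hx.2]⟩
  have hint : Integrable (fun x => Real.exp (u * (x - m))) μ := by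
    apply Integrable.mono' (integrable_const (Real.exp (|u| * H)))
    · exact (Real.continuous_exp.comp (continuous_const.mul (continuous_id.sub
        continuous_const))).aestronglyMeasurable
    · filter_upwards [hdev] with x hx
      rw [Real.norm_eq_abs, abs_of_pos (Real.exp_pos _), Real.exp_le_exp]
      calc u * (x - m) ≤ |u * (x - m)| := le_abs_self _
        _ = |u| * |x - m| := abs_mul _ _
        _ ≤ |u| * H := by gcongr
  refine ⟨hint, ?_⟩
  set c₁ : ℝ := (exp (u * H) - exp (-(u * H))) / (2 * H) with hc₁
  set c₂ : ℝ := ((H - m) * exp (u * H) + (H + m) * exp (-(u * H))) / (2 * H) with hc₂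
  have hgint : Integrable (fun x => c₁ * x + c₂) μ := (hid.const_mul c₁).add (integrable_const c₂)
  have hptwise : ∀ᵐ x ∂μ, Real.exp (u * (x - m)) ≤ c₁ * x + c₂ := by
    filter_upwards [hdev] with x hx
    rw [abs_le] at hx
    have ha : (0:ℝ) ≤ (x - m + H) / (2 * H) := by
      apply div_nonneg (by linarith [hx.1]) (by linarith)
    have hb : (0:ℝ) ≤ (H - (x - m)) / (2 * H) := by
      apply div_nonneg (by linarith [hx.2]) (by linarith)
    have hab : (x - m + H) / (2 * H) + (H - (x - m)) / (2 * H) = 1 := by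
      field_simp; ring
    have hcx := convexOn_exp.2 (Set.mem_univ (u * H)) (Set.mem_univ (-(u * H))) ha hb hab
    simp only [smul_eq_mul] at hcx
    have harg : (x - m + H) / (2 * H) * (u * H) + (H - (x - m)) / (2 * H) * (-(u * H))
        = u * (x - m) := by field_simp; ring
    rw [harg] at hcx
    calc Real.exp (u * (x - m))
        ≤ (x - m + H) / (2 * H) * exp (u * H) + (H - (x - m)) / (2 * H) * exp (-(u * H)) := hcx
      _ = c₁ * x + c₂ := by rw [hc₁, hc₂]; field_simp; ring
  calc ∫ x, Real.exp (u * (x - m)) ∂μ ≤ ∫ x, c₁ * x + c₂ ∂μ :=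
        integral_mono_ae hint hgint hptwise
    _ = c₁ * m + c₂ := by
        rw [integral_add (hid.const_mul c₁) (integrable_const c₂), integral_const_mul, hm]
        simp
    _ = (exp (u * H) + exp (-(u * H))) / 2 := by rw [hc₁, hc₂]; field_simp; ring
    _ ≤ exp ((u * H) ^ 2 / 2) := cosh_le_exp_sq (u * H)
    _ = Real.exp (u ^ 2 * H ^ 2 / 2) := by rw [mul_pow]

end AuxLemmas

theorem stmt11 (D : ℕ) (hD : 1 ≤ D) (H : ℝ) (hH : 0 < H)
    (ς : ℝ → ℝ) (hmono : Monotone ς) (hodd : ∀ x, ς (-x) = -ς x)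
    (hbdd : ∀ x, |ς x| ≤ 1 / 2) (hpos : 0 < ς (H / Real.sqrt D))
    (μX μY : Measure ℝ) [IsProbabilityMeasure μX] [IsProbabilityMeasure μY]
    (hXrange : ∀ᵐ x ∂μX, x ∈ Set.Icc 0 H) (hYrange : ∀ᵐ y ∂μY, y ∈ Set.Icc 0 H)
    (m₁ m₀ : ℝ) (hm₁ : ∫ x, x ∂μX = m₁) (hm₀ : ∫ y, y ∂μY = m₀)
    (hgap : m₁ - m₀ ≥
      4 * H / Real.sqrt D * Real.sqrt (2 * Real.log (2 / ς (H / Real.sqrt D)))) :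
    ∫ p, ς ((∑ i, p.1 i) / D - (∑ i, p.2 i) / D)
        ∂((Measure.pi fun _ : Fin D => μX).prod (Measure.pi fun _ : Fin D => μY))
      ≥ 1 / 2 * ς ((m₁ - m₀) / 2) := by
  have hDpos : (0:ℝ) < D := by exact_mod_cast hD
  have hsD : 0 < Real.sqrt D := Real.sqrt_pos.2 hDpos
  set s := ς (H / Real.sqrt D) with hs
  set Δ := m₁ - m₀ with hΔdef
  set t := Δ / 2 with ht
  set ν := (Measure.pi fun _ : Fin D => μX).prod (Measure.pi fun _ : Fin D => μY) with hν
  set Z : (Fin D → ℝ) × (Fin D → ℝ) → ℝ :=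
    fun p => (∑ i, p.1 i) / D - (∑ i, p.2 i) / D with hZ
  have hνprob : IsProbabilityMeasure ν := by infer_instance
  -- basic facts about s, logs
  have hs2 : s ≤ 1/2 := le_trans (le_abs_self _) (hbdd _)
  have h2s : 1 < 2 / s := by rw [lt_div_iff₀ hpos]; linarith
  have hlog1 : 0 < Real.log (2/s) := Real.log_pos h2s
  have hlog2 : 1/2 ≤ Real.log (2/s) := by
    rw [Real.le_log_iff_exp_le (by positivity)]
    have h1 : Real.exp (1/2) ≤ Real.exp 1 := Real.exp_le_exp.2 (by norm_num)
    have h2 : Real.exp 1 < 3 := lt_trans Real.exp_one_lt_d9 (by norm_num)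
    have h4 : (4:ℝ) ≤ 2 / s := by rw [le_div_iff₀ hpos]; linarith
    linarith
  set L := 2 * Real.log (2/s) with hL
  have hL1 : 1 ≤ L := by rw [hL]; linarith
  have hsqrt1 : 1 ≤ Real.sqrt L := by
    rw [show (1:ℝ) = Real.sqrt 1 from Real.sqrt_one.symm]
    exact Real.sqrt_le_sqrt hL1
  -- Δ, t facts
  have haux : 0 < 4 * H / Real.sqrt D := by positivity
  have hΔ0 : 0 < Δ := lt_of_lt_of_le (by nlinarith) hgap
  have htpos : 0 < t := by rw [ht]; linarith
  have htH : H / Real.sqrt D ≤ t := by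
    have h1 : 4 * H / Real.sqrt D ≤ 4 * H / Real.sqrt D * Real.sqrt L :=
      le_mul_of_one_le_right haux.le hsqrt1
    have h2 : 4 * H / Real.sqrt D = 4 * (H / Real.sqrt D) := by ring
    have h3 : 0 < H / Real.sqrt D := by positivity
    rw [ht]; rw [h2] at h1; nlinarith [hgap]
  have hst : s ≤ ς t := hmono htH
  have hςt_le : ς t ≤ 1/2 := le_trans (le_abs_self _) (hbdd t)
  -- Chernoff setup
  set lam := t * D / (2 * H^2) with hlam
  have hlam0 : 0 < lam := by positivity
  have hmgfX := mgf_bound μX hH hXrange hm₁ (-(lam/D))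
  have hmgfY := mgf_bound μY hH hYrange hm₀ (lam/D)
  set fX : ℝ → ℝ := fun x => Real.exp (-(lam/D) * (x - m₁)) with hfX
  set fY : ℝ → ℝ := fun y => Real.exp ((lam/D) * (y - m₀)) with hfY
  have hW : ∀ p : (Fin D → ℝ) × (Fin D → ℝ),
      Real.exp (-lam * (Z p - Δ)) = (∏ i, fX (p.1 i)) * (∏ i, fY (p.2 i)) := by
    intro p
    rw [hfX, hfY, ← Real.exp_sum, ← Real.exp_sum, ← Real.exp_add]
    congr 1
    have e1 : ∑ i, -(lam/D) * (p.1 i - m₁) = -(lam/D) * ((∑ i, p.1 i) - D * m₁) := by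
      rw [← Finset.mul_sum, Finset.sum_sub_distrib, Finset.sum_const, Finset.card_univ,
        Fintype.card_fin, nsmul_eq_mul]
    have e2 : ∑ i, (lam/D) * (p.2 i - m₀) = (lam/D) * ((∑ i, p.2 i) - D * m₀) := by
      rw [← Finset.mul_sum, Finset.sum_sub_distrib, Finset.sum_const, Finset.card_univ,
        Fintype.card_fin, nsmul_eq_mul]
    rw [e1, e2, hZ]
    field_simp
    ring
  have hFXint : Integrable (fun x : Fin D → ℝ => ∏ i, fX (x i)) (Measure.pi fun _ => μX) :=
    Integrable.fintype_prod (𝕜 := ℝ) (ι := Fin D) (f := fun _ => fX) (μ := fun _ => μX) (fun _ => hmgfX.1)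
  have hFYint : Integrable (fun y : Fin D → ℝ => ∏ i, fY (y i)) (Measure.pi fun _ => μY) :=
    Integrable.fintype_prod (𝕜 := ℝ) (ι := Fin D) (f := fun _ => fY) (μ := fun _ => μY) (fun _ => hmgfY.1)
  have hWint : Integrable (fun p : (Fin D → ℝ) × (Fin D → ℝ) =>
      (∏ i, fX (p.1 i)) * (∏ i, fY (p.2 i))) ν := hFXint.mul_prod hFYint
  have hWval : ∫ p, (∏ i, fX (p.1 i)) * (∏ i, fY (p.2 i)) ∂ν
      = (∫ x, fX x ∂μX) ^ D * (∫ y, fY y ∂μY) ^ D := by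
    rw [hν]
    rw [integral_prod_mul (μ := Measure.pi fun _ : Fin D => μX) (ν := Measure.pi fun _ : Fin D => μY)
      (fun x : Fin D → ℝ => ∏ i, fX (x i)) (fun y : Fin D → ℝ => ∏ i, fY (y i))]
    congr 1
    · have := MeasureTheory.integral_fintype_prod_eq_pow (𝕜 := ℝ) (ι := Fin D) fX (μ := μX)
      simpa using this
    · have := MeasureTheory.integral_fintype_prod_eq_pow (𝕜 := ℝ) (ι := Fin D) fY (μ := μY)
      simpa using this
  -- bound the mgf value
  have hIX0 : 0 ≤ ∫ x, fX x ∂μX := integral_nonneg fun x => (Real.exp_pos _).le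
  have hIY0 : 0 ≤ ∫ y, fY y ∂μY := integral_nonneg fun y => (Real.exp_pos _).le
  have hbound : (∫ x, fX x ∂μX) ^ D * (∫ y, fY y ∂μY) ^ D
      ≤ Real.exp (lam^2 * H^2 / D) := by
    have hx : (∫ x, fX x ∂μX) ^ D ≤ (Real.exp ((-(lam/D))^2 * H^2/2)) ^ D := by
      apply pow_le_pow_left₀ hIX0
      simpa [hfX] using hmgfX.2
    have hy : (∫ y, fY y ∂μY) ^ D ≤ (Real.exp ((lam/D)^2 * H^2/2)) ^ D := by
      apply pow_le_pow_left₀ hIY0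
      simpa [hfY] using hmgfY.2
    calc (∫ x, fX x ∂μX) ^ D * (∫ y, fY y ∂μY) ^ D
        ≤ (Real.exp ((-(lam/D))^2 * H^2/2)) ^ D * (Real.exp ((lam/D)^2 * H^2/2)) ^ D := by
          apply mul_le_mul hx hy (pow_nonneg hIY0 _) (pow_nonneg (Real.exp_pos _).le _)
      _ = Real.exp (lam^2 * H^2 / D) := by
          rw [← Real.exp_nat_mul, ← Real.exp_nat_mul, ← Real.exp_add]
          congr 1
          field_simp
          ring
  -- Markov
  have hZmeas : Measurable Z := by
    apply Measurable.sub <;> apply Measurable.div_const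
    · exact Finset.measurable_sum _ (fun i _ => (measurable_pi_apply i).comp measurable_fst)
    · exact Finset.measurable_sum _ (fun i _ => (measurable_pi_apply i).comp measurable_snd)
  have hWnonneg : 0 ≤ᵐ[ν] fun p : (Fin D → ℝ) × (Fin D → ℝ) =>
      (∏ i, fX (p.1 i)) * (∏ i, fY (p.2 i)) := by
    refine Filter.Eventually.of_forall fun p => ?_
    apply mul_nonneg <;> exact Finset.prod_nonneg fun i _ => (Real.exp_pos _).le
  have hmark := mul_meas_ge_le_integral_of_nonneg hWnonneg hWint (Real.exp (lam * t))
  have hsub : {p | Z p < t} ⊆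
      {p | Real.exp (lam * t) ≤ (∏ i, fX (p.1 i)) * (∏ i, fY (p.2 i))} := by
    intro p hp
    simp only [Set.mem_setOf_eq] at hp ⊢
    rw [← hW p, Real.exp_le_exp]
    nlinarith [hp, hlam0, htpos]
  have hptoReal : (ν {p | Z p < t}).toReal ≤ Real.exp (-(lam * t)) * Real.exp (lam^2 * H^2 / D) := by
    have h1 : ν {p | Z p < t} ≤ ν {p | Real.exp (lam * t) ≤ (∏ i, fX (p.1 i)) * (∏ i, fY (p.2 i))} :=
      measure_mono hsub
    have h2 : (ν {p | Z p < t}).toReal ≤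
        (ν {p | Real.exp (lam * t) ≤ (∏ i, fX (p.1 i)) * (∏ i, fY (p.2 i))}).toReal :=
      ENNReal.toReal_mono (measure_ne_top _ _) h1
    have h3 := hmark
    rw [hWval] at h3
    set V := (∫ x, fX x ∂μX) ^ D * (∫ y, fY y ∂μY) ^ D with hV
    set r := (ν {p | Real.exp (lam * t) ≤ (∏ i, fX (p.1 i)) * (∏ i, fY (p.2 i))}).toReal with hr
    have h4 : r ≤ Real.exp (-(lam * t)) * V := by
      rw [Real.exp_neg]
      calc r = (Real.exp (lam * t))⁻¹ * (Real.exp (lam * t) * r) := by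
            rw [← mul_assoc, inv_mul_cancel₀ (Real.exp_pos _).ne', one_mul]
        _ ≤ _ := mul_le_mul_of_nonneg_left h3 (by positivity)
    calc (ν {p | Z p < t}).toReal ≤ r := h2
      _ ≤ Real.exp (-(lam * t)) * V := h4
      _ ≤ Real.exp (-(lam * t)) * Real.exp (lam^2 * H^2 / D) :=
          mul_le_mul_of_nonneg_left hbound (Real.exp_pos _).le
  -- numeric: exp(-lam t + lam² H²/D) ≤ s/2
  have hfinalp : (ν {p | Z p < t}).toReal ≤ s / 2 := by
    have hΔsq : 16 * H^2 / D * L ≤ Δ^2 := by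
      have h1 : (4*H/Real.sqrt D * Real.sqrt L)^2 = 16*H^2/D*L := by
        rw [mul_pow, div_pow, Real.sq_sqrt (by linarith : (0:ℝ) ≤ L),
          Real.sq_sqrt hDpos.le]
        ring
      have h2 : (4*H/Real.sqrt D * Real.sqrt L)^2 ≤ Δ^2 := by
        apply pow_le_pow_left₀ (by positivity) hgap
      linarith [h1 ▸ h2]
    have hexp_arg : -(lam * t) + lam^2 * H^2 / D ≤ -Real.log (2/s) := by
      rw [hlam]
      have hH2 : (0:ℝ) < H^2 := by positivity
      have e1 : -(t * ↑D / (2 * H ^ 2) * t) + (t * ↑D / (2 * H ^ 2))^2 * H^2 / D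
          = -(t^2 * D / (4 * H^2)) := by field_simp; ring
      rw [e1, neg_le_neg_iff]
      rw [le_div_iff₀ (by positivity)]
      have ht2 : t^2 = Δ^2/4 := by rw [ht]; ring
      rw [ht2]
      have key : 16 * H^2 * L ≤ Δ^2 * D := by
        have := mul_le_mul_of_nonneg_right hΔsq hDpos.le
        calc 16 * H^2 * L = 16 * H^2 / D * L * D := by field_simp
          _ ≤ Δ^2 * D := this
      rw [hL] at key
      nlinarith [key]
    calc (ν {p | Z p < t}).toReal
        ≤ Real.exp (-(lam * t)) * Real.exp (lam^2 * H^2 / D) := hptoReal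
      _ = Real.exp (-(lam * t) + lam^2 * H^2 / D) := (Real.exp_add _ _).symm
      _ ≤ Real.exp (-Real.log (2/s)) := Real.exp_le_exp.2 hexp_arg
      _ = s / 2 := by rw [Real.exp_neg, Real.exp_log (by positivity), inv_div]
  -- lower bound the integral
  have hςZint : Integrable (fun p => ς (Z p)) ν := by
    apply Integrable.mono' (integrable_const (1/2 : ℝ))
    · exact (hmono.measurable.comp hZmeas).aestronglyMeasurable
    · exact Filter.Eventually.of_forall fun p => by rw [Real.norm_eq_abs]; exact hbdd _
  set A := {p : (Fin D → ℝ) × (Fin D → ℝ) | t ≤ Z p} with hA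
  have hAmeas : MeasurableSet A := measurableSet_le measurable_const hZmeas
  have hAc : Aᶜ = {p | Z p < t} := by ext p; simp [hA, not_le]
  have hsplit : ∫ p, ς (Z p) ∂ν = (∫ p in A, ς (Z p) ∂ν) + ∫ p in Aᶜ, ς (Z p) ∂ν :=
    (integral_add_compl hAmeas hςZint).symm
  have h1 : ς t * (ν A).toReal ≤ ∫ p in A, ς (Z p) ∂ν := by
    have := setIntegral_mono_on (integrableOn_const)
      hςZint.integrableOn hAmeas (fun p hp => hmono (hp : t ≤ Z p))
    calc ς t * (ν A).toReal = ∫ _ in A, ς t ∂ν := by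
          rw [setIntegral_const, smul_eq_mul, mul_comm]; rfl
      _ ≤ _ := this
  have h2 : (-(1/2)) * (ν Aᶜ).toReal ≤ ∫ p in Aᶜ, ς (Z p) ∂ν := by
    have := setIntegral_mono_on (integrableOn_const)
      hςZint.integrableOn hAmeas.compl
      (fun p _ => (abs_le.1 (hbdd (Z p))).1)
    calc (-(1/2)) * (ν Aᶜ).toReal = ∫ _ in Aᶜ, -(1/2 : ℝ) ∂ν := by
          rw [setIntegral_const, smul_eq_mul, mul_comm]; rfl
      _ ≤ _ := by simpa using this
  have hsum : (ν A).toReal + (ν Aᶜ).toReal = 1 := by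
    rw [← ENNReal.toReal_add (measure_ne_top _ _) (measure_ne_top _ _),
      measure_add_measure_compl hAmeas, measure_univ, ENNReal.toReal_one]
  have hp0 : 0 ≤ (ν Aᶜ).toReal := ENNReal.toReal_nonneg
  have hple : (ν Aᶜ).toReal ≤ s / 2 := by rw [hAc]; exact hfinalp
  have hgoal : (1:ℝ)/2 * ς ((m₁ - m₀)/2) ≤ ∫ p, ς (Z p) ∂ν := by
    rw [hsplit]
    have : (1:ℝ)/2 * ς t ≤ ς t * (ν A).toReal + (-(1/2)) * (ν Aᶜ).toReal := by
      nlinarith [hst, hs2, hςt_le, hp0, hple, hsum, hpos]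
    calc (1:ℝ)/2 * ς ((m₁ - m₀)/2) = 1/2 * ς t := by rw [ht, hΔdef]
      _ ≤ _ := this
      _ ≤ _ := add_le_add h1 h2
  exact hgoal
end

section
/- (Explicit batch distinguishability under a smooth link; abstract form of the distinguishability bound used in Corollary 1.) Let D ≥ 1, H > 0, L > 0 and c > 0 with D ≥ L²H²/c². Let ς : ℝ → ℝ be a deviation function that is differentiable with L-Lipschitz derivative ς′ and ς′(0) = c. Let X₁, …, X_D be i.i.d. random variables in [0, H] with mean m₁ and Y₁, …, Y_D be i.i.d. random variables in [0, H] with mean m₀, with the two samples independent, and set X̄ = (1/D)∑ X_i, Ȳ = (1/D)∑ Y_i. Then ς(H/√D) ≥ cH/(2√D) > 0, and if m₁ − m₀ ≥ (4H/√D) · √( 2 log( 4√D / (cH) ) ), then E[ ς( X̄ − Ȳ ) ] ≥ (1/2) · ς( (m₁ − m₀)/2 ). -/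
open MeasureTheory

section Aux
open Real

lemma aux_pi_int {E : Type*} [MeasurableSpace E] (μ : Measure E) [SigmaFinite μ] (D : ℕ)
    (f : E → ℝ) :
    ∫ x : Fin D → E, ∏ i, f (x i) ∂Measure.pi (fun _ => μ) = (∫ x, f x ∂μ) ^ D := by
  letI : MeasureSpace E := ⟨μ⟩
  haveI : SigmaFinite (volume : Measure E) := ‹_›
  simpa using MeasureTheory.integral_fintype_prod_eq_pow (ι := Fin D) f (μ := μ)

lemma aux_int_exp (μ : Measure ℝ) [IsProbabilityMeasure μ] {H : ℝ}
    (hrange : ∀ᵐ x ∂μ, x ∈ Set.Icc 0 H) (r : ℝ) :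
    Integrable (fun x => Real.exp (r * x)) μ := by
  refine (integrable_const (Real.exp (|r| * H))).mono'
    ((measurable_id.const_mul r).exp.aestronglyMeasurable) ?_
  filter_upwards [hrange] with x hx
  rw [Real.norm_eq_abs, abs_of_pos (Real.exp_pos _)]
  apply Real.exp_le_exp.2
  calc r * x ≤ |r * x| := le_abs_self _
    _ = |r| * |x| := abs_mul _ _
    _ ≤ |r| * H := by
        apply mul_le_mul_of_nonneg_left _ (abs_nonneg r)
        rw [abs_of_nonneg hx.1]; exact hx.2

lemma aux_mgf (μ : Measure ℝ) [IsProbabilityMeasure μ] {H m : ℝ} (hH : 0 < H)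
    (hrange : ∀ᵐ x ∂μ, x ∈ Set.Icc 0 H) (hm : ∫ x, x ∂μ = m) (s : ℝ) :
    ∫ x, Real.exp (s * x) ∂μ ≤ Real.exp (s * m + s ^ 2 * H ^ 2 / 2) := by
  have hint_id : Integrable (fun x : ℝ => x) μ := by
    refine (integrable_const H).mono' measurable_id.aestronglyMeasurable ?_
    filter_upwards [hrange] with x hx
    rw [Real.norm_eq_abs, abs_le]; exact ⟨by linarith [hx.1], hx.2⟩
  have hm0 : 0 ≤ m := hm ▸ integral_nonneg_of_ae (hrange.mono fun x hx => hx.1)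
  have hmH : m ≤ H := by
    have := integral_mono_ae hint_id (integrable_const H) (hrange.mono fun x hx => hx.2)
    simpa [hm] using this
  set A := Real.cosh (s * H) with hA
  set B := Real.sinh (s * H) / H with hB
  have hpt : ∀ᵐ x ∂μ, Real.exp (s * x) ≤ Real.exp (s * m) * (A + B * (x - m)) := by
    filter_upwards [hrange] with x hx
    have hu1 : -H ≤ x - m := by linarith [hx.1]
    have hu2 : x - m ≤ H := by linarith [hx.2]
    set u := x - m with hu
    set lam := (H - u) / (2 * H) with hlam
    have hlam0 : 0 ≤ lam := by rw [hlam]; apply div_nonneg (by linarith) (by linarith)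
    have hlam1 : 0 ≤ 1 - lam := by
      rw [hlam]; rw [sub_nonneg, div_le_one (by positivity)]; linarith
    have hconv := convexOn_exp.2 (Set.mem_univ (-(s * H))) (Set.mem_univ (s * H))
      hlam0 hlam1 (by ring)
    have harg : lam • (-(s * H)) + (1 - lam) • (s * H) = s * u := by
      rw [hlam, smul_eq_mul, smul_eq_mul]; field_simp; ring
    rw [harg] at hconv
    have hrhs : lam • Real.exp (-(s * H)) + (1 - lam) • Real.exp (s * H) = A + B * u := by
      rw [hlam, hA, hB, Real.cosh_eq, Real.sinh_eq, Real.exp_neg, smul_eq_mul, smul_eq_mul]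
      have h1 : Real.exp (s * H) ≠ 0 := (Real.exp_pos _).ne'
      field_simp
      ring
    rw [hrhs] at hconv
    calc Real.exp (s * x) = Real.exp (s * m) * Real.exp (s * u) := by
          rw [← Real.exp_add, hu]; ring_nf
      _ ≤ Real.exp (s * m) * (A + B * u) := by
          exact mul_le_mul_of_nonneg_left hconv (Real.exp_pos _).le
  have hsub : Integrable (fun x : ℝ => x - m) μ := hint_id.sub (integrable_const m)
  have hintR : Integrable (fun x => Real.exp (s * m) * (A + B * (x - m))) μ := by
    exact (((integrable_const A).add (hsub.const_mul B)).const_mul _)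
  have hintL : Integrable (fun x => Real.exp (s * x)) μ := aux_int_exp μ hrange s
  have hstep := integral_mono_ae hintL hintR hpt
  have hcomp : ∫ x, Real.exp (s * m) * (A + B * (x - m)) ∂μ = Real.exp (s * m) * A := by
    rw [integral_const_mul]
    have : ∫ x, (A + B * (x - m)) ∂μ = A + B * ((∫ x, x ∂μ) - m) := by
      rw [integral_add (integrable_const A) (hsub.const_mul B),
        integral_const, integral_const_mul,
        integral_sub hint_id (integrable_const m), integral_const]
      simp
    rw [this, hm]; ring_nf
  rw [hcomp] at hstep
  refine hstep.trans ?_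
  rw [Real.exp_add]
  refine mul_le_mul_of_nonneg_left ?_ (Real.exp_pos _).le
  calc A ≤ Real.exp ((s * H) ^ 2 / 2) := Real.cosh_le_exp_half_sq (s * H)
    _ = Real.exp (s ^ 2 * H ^ 2 / 2) := by ring_nf

lemma aux_lower (ς ς' : ℝ → ℝ) (L c : ℝ)
    (hderiv : ∀ x, HasDerivAt ς (ς' x) x)
    (hlip : ∀ x y, |ς' x - ς' y| ≤ L * |x - y|) (hc0 : ς' 0 = c) (hς0 : ς 0 = 0)
    {x : ℝ} (hx : 0 ≤ x) : c * x - L * x ^ 2 / 2 ≤ ς x := by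
  set g : ℝ → ℝ := fun y => ς y - c * y + L * y ^ 2 / 2 with hgdef
  have hg : ∀ y, HasDerivAt g (ς' y - c + L * y) y := by
    intro y
    have h1 : HasDerivAt (fun t : ℝ => c * t) c y := by
      simpa using (hasDerivAt_id y).const_mul c
    have h2 : HasDerivAt (fun t : ℝ => L * t ^ 2 / 2) (L * y) y := by
      have h : HasDerivAt (fun t : ℝ => L / 2 * t ^ 2) (L / 2 * (2 * y)) y := by
        simpa using (hasDerivAt_pow 2 y).const_mul (L / 2)
      convert h using 1
      · funext t; ring
      · ring
    exact ((hderiv y).sub h1).add h2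
  have hmono : MonotoneOn g (Set.Ici 0) := by
    apply monotoneOn_of_deriv_nonneg (convex_Ici 0)
    · exact (Continuous.continuousOn (by
        exact Differentiable.continuous (fun y => (hg y).differentiableAt)))
    · intro y hy
      exact (hg y).differentiableAt.differentiableWithinAt
    · intro y hy
      rw [interior_Ici] at hy
      rw [(hg y).deriv]
      have := hlip y 0
      rw [hc0, sub_zero, abs_of_pos (Set.mem_Ioi.1 hy)] at this
      have h2 := abs_le.1 this
      linarith [h2.1]
  have := hmono (Set.self_mem_Ici) (Set.mem_Ici.2 hx) hx
  simp only [hgdef, hς0] at this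
  nlinarith [this]

end Aux

set_option maxHeartbeats 1000000 in
theorem stmt16 (D : ℕ) (hD : 1 ≤ D) (H L c : ℝ) (hH : 0 < H) (hL : 0 < L)
    (hc : 0 < c) (hDbig : (D : ℝ) ≥ L ^ 2 * H ^ 2 / c ^ 2)
    (ς : ℝ → ℝ) (ς' : ℝ → ℝ)
    (hmono : Monotone ς) (hodd : ∀ x, ς (-x) = -ς x) (hbdd : ∀ x, |ς x| ≤ 1 / 2)
    (hderiv : ∀ x, HasDerivAt ς (ς' x) x)
    (hlip : ∀ x y, |ς' x - ς' y| ≤ L * |x - y|) (hc0 : ς' 0 = c)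
    (μX μY : Measure ℝ) [IsProbabilityMeasure μX] [IsProbabilityMeasure μY]
    (hXrange : ∀ᵐ x ∂μX, x ∈ Set.Icc 0 H) (hYrange : ∀ᵐ y ∂μY, y ∈ Set.Icc 0 H)
    (m₁ m₀ : ℝ) (hm₁ : ∫ x, x ∂μX = m₁) (hm₀ : ∫ y, y ∂μY = m₀) :
    ς (H / Real.sqrt D) ≥ c * H / (2 * Real.sqrt D) ∧
    0 < c * H / (2 * Real.sqrt D) ∧
    (m₁ - m₀ ≥ 4 * H / Real.sqrt D *
        Real.sqrt (2 * Real.log (4 * Real.sqrt D / (c * H))) →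
      ∫ p, ς ((∑ i, p.1 i) / D - (∑ i, p.2 i) / D)
          ∂((Measure.pi fun _ : Fin D => μX).prod (Measure.pi fun _ : Fin D => μY))
        ≥ 1 / 2 * ς ((m₁ - m₀) / 2)) := by
  have hD0 : (0 : ℝ) < D := by exact_mod_cast hD
  set sD := Real.sqrt D with hsDdef
  have hsD0 : 0 < sD := Real.sqrt_pos.2 hD0
  have hsDsq : sD ^ 2 = D := Real.sq_sqrt hD0.le
  have hς0 : ς 0 = 0 := by have := hodd 0; simp at this; linarith
  -- sD ≥ L*H/c
  have hsDLH : L * H / c ≤ sD := by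
    rw [hsDdef]
    rw [Real.le_sqrt (by positivity) (by positivity)]
    calc (L * H / c) ^ 2 = L ^ 2 * H ^ 2 / c ^ 2 := by ring
      _ ≤ (D : ℝ) := hDbig
  -- Part 1
  have part1 : ς (H / sD) ≥ c * H / (2 * sD) := by
    have h := aux_lower ς ς' L c hderiv hlip hc0 hς0 (x := H / sD) (by positivity)
    have hLH : L * H ≤ c * sD := by
      rw [div_le_iff₀ hc] at hsDLH
      linarith
    have key : L * (H / sD) ^ 2 ≤ c * (H / sD) := by
      have hu : 0 < H / sD := by positivity
      have ht : L * H / sD ≤ c := (div_le_iff₀ hsD0).2 (by linarith)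
      calc L * (H / sD) ^ 2 = (L * H / sD) * (H / sD) := by ring
        _ ≤ c * (H / sD) := mul_le_mul_of_nonneg_right ht hu.le
    calc ς (H / sD) ≥ c * (H / sD) - L * (H / sD) ^ 2 / 2 := h
      _ ≥ c * (H / sD) - c * (H / sD) / 2 := by linarith
      _ = c * H / (2 * sD) := by field_simp; ring
  have part2 : 0 < c * H / (2 * sD) := by positivity
  refine ⟨part1, part2, ?_⟩
  intro hΔbig
  -- main probabilistic part
  set Δ := m₁ - m₀ with hΔdef
  set a := Δ / 2 with hadef
  set q := c * H / (4 * sD) with hqdef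
  set t₀ := 4 * sD / (c * H) with ht₀def
  have hcH : 0 < c * H := by positivity
  have hq0 : 0 < q := by positivity
  have ht₀0 : 0 < t₀ := by positivity
  have hqt : q * t₀ = 1 := by rw [hqdef, ht₀def]; field_simp
  have hcHsD : c * H ≤ sD := by
    have h1 : c * H / (2 * sD) ≤ 1 / 2 := le_trans (le_trans part1 (le_abs_self _)) (hbdd _)
    rw [div_le_div_iff₀ (by positivity) (by norm_num)] at h1
    linarith
  have ht₀4 : 4 ≤ t₀ := by
    rw [ht₀def, le_div_iff₀ hcH]; linarith
  have hlogt₀ : 1 ≤ Real.log t₀ := by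
    rw [Real.le_log_iff_exp_le ht₀0]
    calc Real.exp 1 ≤ 2.7182818286 := (Real.exp_one_lt_d9).le
      _ ≤ 4 := by norm_num
      _ ≤ t₀ := ht₀4
  have hq14 : q ≤ 1 / 4 := by
    rw [hqdef, div_le_div_iff₀ (by positivity) (by norm_num)]
    linarith
  have hsq1 : 1 ≤ Real.sqrt (2 * Real.log t₀) := by
    rw [show (1:ℝ) = Real.sqrt 1 by simp]
    exact Real.sqrt_le_sqrt (by linarith)
  have hΔ4 : 4 * (H / sD) ≤ Δ := by
    calc 4 * (H / sD) = 4 * H / sD * 1 := by ring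
      _ ≤ 4 * H / sD * Real.sqrt (2 * Real.log t₀) := by
          apply mul_le_mul_of_nonneg_left hsq1 (by positivity)
      _ ≤ Δ := hΔbig
  have hΔ0 : 0 < Δ := lt_of_lt_of_le (by positivity) hΔ4
  have ha0 : 0 < a := by rw [hadef]; linarith
  have haH : H / sD ≤ a := by
    have hu : 0 ≤ H / sD := by positivity
    rw [hadef]
    linarith [hΔ4, hu]
  have hςa : 2 * q ≤ ς a := by
    have h1 := hmono haH
    have h2 : c * H / (2 * sD) = 2 * q := by rw [hqdef]; ring
    linarith [part1]
  have hςa12 : ς a ≤ 1 / 2 := le_trans (le_abs_self _) (hbdd _)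
  -- measure-theoretic setup
  set ν := (Measure.pi fun _ : Fin D => μX).prod (Measure.pi fun _ : Fin D => μY) with hνdef
  set Z : (Fin D → ℝ) × (Fin D → ℝ) → ℝ :=
    fun p => (∑ i, p.1 i) / (D : ℝ) - (∑ i, p.2 i) / (D : ℝ) with hZdef
  have hZmeas : Measurable Z := by
    apply Measurable.sub
    · exact (Finset.measurable_sum Finset.univ
        (fun i _ => (measurable_pi_apply i).comp measurable_fst)).div_const _
    · exact (Finset.measurable_sum Finset.univ
        (fun i _ => (measurable_pi_apply i).comp measurable_snd)).div_const _
  have hXae : ∀ᵐ x ∂(Measure.pi fun _ : Fin D => μX), ∀ i, x i ∈ Set.Icc 0 H := by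
    rw [ae_all_iff]
    intro i
    have h0 : μX {t : ℝ | t ∉ Set.Icc 0 H} = 0 := ae_iff.1 hXrange
    have := Measure.pi_eval_preimage_null (μ := fun _ : Fin D => μX) (i := i) h0
    refine ae_iff.2 ?_
    simpa [Function.eval] using this
  have hYae : ∀ᵐ y ∂(Measure.pi fun _ : Fin D => μY), ∀ i, y i ∈ Set.Icc 0 H := by
    rw [ae_all_iff]
    intro i
    have h0 : μY {t : ℝ | t ∉ Set.Icc 0 H} = 0 := ae_iff.1 hYrange
    have := Measure.pi_eval_preimage_null (μ := fun _ : Fin D => μY) (i := i) h0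
    refine ae_iff.2 ?_
    simpa [Function.eval] using this
  have hν1 : ∀ᵐ p ∂ν, ∀ i, p.1 i ∈ Set.Icc 0 H :=
    (Measure.quasiMeasurePreserving_fst).ae hXae
  have hν2 : ∀ᵐ p ∂ν, ∀ i, p.2 i ∈ Set.Icc 0 H :=
    (Measure.quasiMeasurePreserving_snd).ae hYae
  have hZae : ∀ᵐ p ∂ν, |Z p| ≤ H := by
    filter_upwards [hν1, hν2] with p h1 h2
    have hs1 : 0 ≤ ∑ i, p.1 i := Finset.sum_nonneg fun i _ => (h1 i).1
    have hs2 : 0 ≤ ∑ i, p.2 i := Finset.sum_nonneg fun i _ => (h2 i).1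
    have hs1' : ∑ i, p.1 i ≤ D * H := by
      calc ∑ i, p.1 i ≤ ∑ _i : Fin D, H := Finset.sum_le_sum fun i _ => (h1 i).2
        _ = D * H := by simp [Finset.sum_const, Finset.card_univ, nsmul_eq_mul]
    have hs2' : ∑ i, p.2 i ≤ D * H := by
      calc ∑ i, p.2 i ≤ ∑ _i : Fin D, H := Finset.sum_le_sum fun i _ => (h2 i).2
        _ = D * H := by simp [Finset.sum_const, Finset.card_univ, nsmul_eq_mul]
    have e1 : 0 ≤ (∑ i, p.1 i) / (D : ℝ) := by positivity
    have e2 : 0 ≤ (∑ i, p.2 i) / (D : ℝ) := by positivity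
    have e3 : (∑ i, p.1 i) / (D : ℝ) ≤ H := by rw [div_le_iff₀ hD0]; linarith
    have e4 : (∑ i, p.2 i) / (D : ℝ) ≤ H := by rw [div_le_iff₀ hD0]; linarith
    rw [hZdef, abs_le]
    constructor <;> simp only <;> linarith
  have hςcont : Continuous ς :=
    Differentiable.continuous fun x => (hderiv x).differentiableAt
  have hintς : Integrable (fun p => ς (Z p)) ν := by
    refine (integrable_const ((1:ℝ)/2)).mono'
      ((hςcont.measurable.comp hZmeas).aestronglyMeasurable) (ae_of_all _ fun p => ?_)
    rw [Real.norm_eq_abs]; exact hbdd _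
  -- Chernoff
  set β := (D : ℝ) * Δ / (4 * H ^ 2) with hβdef
  have hβ0 : 0 < β := by rw [hβdef]; positivity
  set s := -β with hsdef
  have hs0 : s ≤ 0 := by rw [hsdef]; linarith
  have hintexp : Integrable (fun p => Real.exp (s * Z p)) ν := by
    refine (integrable_const (Real.exp (|s| * H))).mono'
      ((hZmeas.const_mul s).exp.aestronglyMeasurable) ?_
    filter_upwards [hZae] with p hp
    rw [Real.norm_eq_abs, abs_of_pos (Real.exp_pos _)]
    apply Real.exp_le_exp.2
    calc s * Z p ≤ |s * Z p| := le_abs_self _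
      _ = |s| * |Z p| := abs_mul _ _
      _ ≤ |s| * H := mul_le_mul_of_nonneg_left hp (abs_nonneg _)
  have hIXnn : 0 ≤ ∫ x, Real.exp ((s / D) * x) ∂μX :=
    integral_nonneg fun x => (Real.exp_pos _).le
  have hIYnn : 0 ≤ ∫ y, Real.exp ((-s / D) * y) ∂μY :=
    integral_nonneg fun y => (Real.exp_pos _).le
  have hmgfle : ∫ p, Real.exp (s * Z p) ∂ν ≤ Real.exp (s * Δ + s ^ 2 * H ^ 2 / D) := by
    have hre : ∀ p : (Fin D → ℝ) × (Fin D → ℝ), Real.exp (s * Z p)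
        = (∏ i, Real.exp ((s / D) * p.1 i)) * (∏ i, Real.exp ((-s / D) * p.2 i)) := by
      intro p
      rw [← Real.exp_sum, ← Real.exp_sum, ← Real.exp_add]
      congr 1
      rw [← Finset.mul_sum, ← Finset.mul_sum, hZdef]
      simp only
      field_simp
      ring
    calc ∫ p, Real.exp (s * Z p) ∂ν
        = (∫ x, Real.exp ((s / D) * x) ∂μX) ^ D * (∫ y, Real.exp ((-s / D) * y) ∂μY) ^ D := by
          rw [show (fun p : (Fin D → ℝ) × (Fin D → ℝ) => Real.exp (s * Z p))
              = fun p => (∏ i, Real.exp ((s / D) * p.1 i)) * (∏ i, Real.exp ((-s / D) * p.2 i))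
            from funext hre]
          rw [hνdef, integral_prod_mul (f := fun x : Fin D → ℝ => ∏ i, Real.exp ((s / D) * x i))
            (g := fun y : Fin D → ℝ => ∏ i, Real.exp ((-s / D) * y i))]
          rw [aux_pi_int μX D (fun t => Real.exp ((s / D) * t)),
            aux_pi_int μY D (fun t => Real.exp ((-s / D) * t))]
      _ ≤ (Real.exp ((s / D) * m₁ + (s / D) ^ 2 * H ^ 2 / 2)) ^ D
            * (Real.exp ((-s / D) * m₀ + (-s / D) ^ 2 * H ^ 2 / 2)) ^ D := by
          apply mul_le_mul
          · exact pow_le_pow_left₀ hIXnn (aux_mgf μX hH hXrange hm₁ _) D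
          · exact pow_le_pow_left₀ hIYnn (aux_mgf μY hH hYrange hm₀ _) D
          · exact pow_nonneg hIYnn D
          · positivity
      _ = Real.exp (s * Δ + s ^ 2 * H ^ 2 / D) := by
          rw [← Real.exp_nat_mul, ← Real.exp_nat_mul, ← Real.exp_add]
          congr 1
          rw [hΔdef]
          field_simp
          ring
  have hcher := ProbabilityTheory.measure_le_le_exp_mul_mgf (μ := ν) (X := Z) a hs0 hintexp
  have htail : (ν {p | Z p ≤ a}).toReal ≤ q ^ 2 := by
    refine hcher.trans ?_
    have hmgf_eq : ProbabilityTheory.mgf Z ν s = ∫ p, Real.exp (s * Z p) ∂ν := rfl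
    rw [hmgf_eq]
    calc Real.exp (-s * a) * ∫ p, Real.exp (s * Z p) ∂ν
        ≤ Real.exp (-s * a) * Real.exp (s * Δ + s ^ 2 * H ^ 2 / D) :=
          mul_le_mul_of_nonneg_left hmgfle (Real.exp_pos _).le
      _ = Real.exp (-((D : ℝ) * Δ ^ 2 / (16 * H ^ 2))) := by
          rw [← Real.exp_add]
          congr 1
          rw [hsdef, hβdef, hadef]
          field_simp
          ring
      _ ≤ Real.exp (-(2 * Real.log t₀)) := by
          apply Real.exp_le_exp.2
          have hΔsq : (4 * H / sD * Real.sqrt (2 * Real.log t₀)) ^ 2 ≤ Δ ^ 2 :=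
            pow_le_pow_left₀ (by positivity) hΔbig 2
          have hsq : (Real.sqrt (2 * Real.log t₀)) ^ 2 = 2 * Real.log t₀ :=
            Real.sq_sqrt (by linarith)
          have hexp : (4 * H / sD * Real.sqrt (2 * Real.log t₀)) ^ 2
              = 16 * H ^ 2 / (D : ℝ) * (2 * Real.log t₀) := by
            rw [mul_pow, hsq, div_pow, hsDsq]
            ring
          rw [hexp] at hΔsq
          rw [neg_le_neg_iff, le_div_iff₀ (by positivity : (0:ℝ) < 16 * H ^ 2)]
          rw [div_mul_eq_mul_div, div_le_iff₀ hD0] at hΔsq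
          linarith [hΔsq]
      _ ≤ q ^ 2 := by
          have hq : q = t₀⁻¹ := eq_inv_of_mul_eq_one_left hqt
          rw [show -(2 * Real.log t₀) = Real.log t₀⁻¹ + Real.log t₀⁻¹ by
            rw [Real.log_inv]; ring, Real.exp_add, Real.exp_log (inv_pos.2 ht₀0), hq]
          ring_nf
          exact le_refl _
  -- decomposition
  set A := {p : (Fin D → ℝ) × (Fin D → ℝ) | a ≤ Z p} with hAdef
  have hAmeas : MeasurableSet A := measurableSet_le measurable_const hZmeas
  have hcompl_sub : Aᶜ ⊆ {p | Z p ≤ a} := by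
    intro p hp
    simp only [hAdef, Set.mem_compl_iff, Set.mem_setOf_eq, not_le] at hp
    exact le_of_lt hp
  have hpc : (ν Aᶜ).toReal ≤ q ^ 2 :=
    le_trans (ENNReal.toReal_mono (measure_ne_top ν _) (measure_mono hcompl_sub)) htail
  have hsum : (ν A).toReal + (ν Aᶜ).toReal = 1 := by
    have h := measure_add_measure_compl (μ := ν) hAmeas
    have h2 := congrArg ENNReal.toReal h
    rw [ENNReal.toReal_add (measure_ne_top ν _) (measure_ne_top ν _)] at h2
    simpa using h2
  have hI : ∫ p, ς (Z p) ∂ν = (∫ p in A, ς (Z p) ∂ν) + ∫ p in Aᶜ, ς (Z p) ∂ν :=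
    (integral_add_compl hAmeas hintς).symm
  have h1 : ς a * (ν A).toReal ≤ ∫ p in A, ς (Z p) ∂ν := by
    have h := setIntegral_mono_on (integrable_const (ς a)).integrableOn
      hintς.integrableOn hAmeas (fun p hp => hmono hp)
    rwa [setIntegral_const, smul_eq_mul, mul_comm] at h
  have h2 : (-(1/2)) * (ν Aᶜ).toReal ≤ ∫ p in Aᶜ, ς (Z p) ∂ν := by
    have h := setIntegral_mono_on (integrable_const (-(1/2 : ℝ))).integrableOn
      hintς.integrableOn hAmeas.compl
      (fun p _ => by have := (abs_le.1 (hbdd (Z p))).1; linarith)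
    rwa [setIntegral_const, smul_eq_mul, mul_comm] at h
  have hpc0 : 0 ≤ (ν Aᶜ).toReal := ENNReal.toReal_nonneg
  have hq1 : q ≤ 1 := by linarith
  have hqq : q ^ 2 ≤ q := by
    calc q ^ 2 = q * q := sq q
      _ ≤ q * 1 := mul_le_mul_of_nonneg_left hq1 hq0.le
      _ = q := mul_one q
  have hv : (ν Aᶜ).toReal ≤ q := hpc.trans hqq
  have hva : (ν Aᶜ).toReal ≤ ς a / 2 := by linarith
  have hu : (ν A).toReal = 1 - (ν Aᶜ).toReal := by linarith
  rw [hu] at h1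
  have hprod : ς a * (ν Aᶜ).toReal ≤ (1/2) * (ν Aᶜ).toReal :=
    mul_le_mul_of_nonneg_right hςa12 hpc0
  have h1' : ς a - ς a * (ν Aᶜ).toReal ≤ ∫ p in A, ς (Z p) ∂ν := by
    have : ς a * (1 - (ν Aᶜ).toReal) = ς a - ς a * (ν Aᶜ).toReal := by ring
    linarith [h1]
  show (∫ p, ς (Z p) ∂ν) ≥ 1 / 2 * ς a
  rw [hI, ge_iff_le]
  linarith [h1', h2, hprod, hva]
end
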